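/- arXiv:1112.4572 — 6 statements merged into one kernel-verified Lean document; each statement's English description precedes it below -/
import Mathlib

section
/- For m i.i.d. bidders with finite type space T and a single item, a bidder-symmetric reduced form π : T → [0,1] is feasible if and only if for every subset S ⊆ T we have m · Σ_{t∈S} π(t)·Pr[t] ≤ 1 − (1 − Pr[t ∈ S])^m. -/
/-!
Necessity: `m · Σ_{t ∈ S} π(t) μ(t)` is the expected number of bidders with type in `S` who
receive the item, which is at most the probability that some bidder has type in `S`.

Sufficiency: the symmetric reduced forms of feasible mechanisms form a compact convex set. If
`π` lay outside it, a linear functional `Σ_A c(A) x(A)` would separate it. Put `v = c⁺ / μ`.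
Writing `v` as a nonnegative combination of indicators of its superlevel sets and adding up
Border's inequalities for these sets gives `m · Σ v π μ ≤ 𝔼[max_i v(t_i)]`, and the right-hand
side is the value, against `v μ`, of the mechanism that gives the item to a bidder of highest
positive `v`, ties broken uniformly. Serving types of probability zero separately with `π`
itself, this mechanism does at least as well as `π` against `c`, a contradiction.
-/

open Finset

namespace Border

variable {T : Type*} {m : ℕ}

def feasibleSet (m : ℕ) (T : Type*) : Set ((Fin m → T) → Fin m → ℝ) :=
  {φ | (∀ P i, 0 ≤ φ P i) ∧ ∀ P, ∑ i, φ P i ≤ 1}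

theorem convex_feasibleSet : Convex ℝ (feasibleSet m T) := by
  rintro φ ⟨hφ0, hφ1⟩ ψ ⟨hψ0, hψ1⟩ a b ha hb hab
  refine ⟨fun P i => ?_, fun P => ?_⟩
  · exact add_nonneg (mul_nonneg ha (hφ0 P i)) (mul_nonneg hb (hψ0 P i))
  · simp only [Pi.add_apply, Pi.smul_apply, smul_eq_mul, sum_add_distrib, ← mul_sum]
    nlinarith [hφ1 P, hψ1 P]

theorem isCompact_feasibleSet : IsCompact (feasibleSet m T) := by
  refine (isCompact_Icc (a := 0) (b := 1)).of_isClosed_subset ?_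
    fun φ hφ => ⟨fun P i => hφ.1 P i, fun P i => ?_⟩
  · simp only [feasibleSet, Set.ofPred_and, Set.ofPred_forall]
    exact (isClosed_iInter fun P => isClosed_iInter fun i =>
        isClosed_le continuous_const (by fun_prop)).inter
      (isClosed_iInter fun P => isClosed_le (by fun_prop) continuous_const)
  · exact (single_le_sum (fun j _ => hφ.1 P j) (mem_univ i)).trans (hφ.2 P)

section DecidableEq

variable [DecidableEq T]

theorem sum_boole_mul_le_of_mem_feasibleSet {φ : (Fin m → T) → Fin m → ℝ}
    (hφ : φ ∈ feasibleSet m T) (S : Finset T) (P : Fin m → T) :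
    ∑ i, (if P i ∈ S then 1 else 0) * φ P i ≤ if ∃ i, P i ∈ S then 1 else 0 := by
  split_ifs with h
  · refine (sum_le_sum fun i _ => ?_).trans (hφ.2 P)
    split_ifs
    · rw [one_mul]
    · rw [zero_mul]; exact hφ.1 P i
  · push Not at h
    exact (sum_eq_zero fun i _ => by rw [if_neg (h i), zero_mul]).le

end DecidableEq

theorem max_sub_add_mul_ite_eq {a α : ℝ} (ha : 0 ≤ a) (hαa : 0 < a → α ≤ a) (hα : 0 ≤ α) :
    max (a - α) 0 + α * (if 0 < a then 1 else 0) = a := by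
  split_ifs with h
  · rw [max_eq_left (by linarith [hαa h])]; ring
  · rw [le_antisymm (not_lt.1 h) ha, max_eq_right (by linarith)]; ring

section MaxValue

variable [Nonempty (Fin m)]

noncomputable def maxValue (v : T → ℝ) (P : Fin m → T) : ℝ :=
  univ.sup' univ_nonempty fun i => v (P i)

theorem le_maxValue (v : T → ℝ) (P : Fin m → T) (i : Fin m) : v (P i) ≤ maxValue v P :=
  le_sup' (fun i => v (P i)) (mem_univ i)

theorem exists_eq_maxValue (v : T → ℝ) (P : Fin m → T) : ∃ i, v (P i) = maxValue v P := by
  obtain ⟨i, -, hi⟩ := exists_mem_eq_sup' univ_nonempty fun i => v (P i)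
  exact ⟨i, hi.symm⟩

theorem maxValue_comp {f : ℝ → ℝ} (hf : Monotone f) (v : T → ℝ) (P : Fin m → T) :
    maxValue (f ∘ v) P = f (maxValue v P) :=
  (apply_sup'_eq_sup'_comp univ_nonempty f fun _ _ => hf.map_max).symm

theorem maxValue_comp_perm (v : T → ℝ) (P : Fin m → T) (σ : Equiv.Perm (Fin m)) :
    maxValue v (P ∘ σ) = maxValue v P :=
  le_antisymm (sup'_le _ _ fun i _ => le_maxValue v P (σ i))
    (sup'_le _ _ fun i _ => by simpa using le_maxValue v (P ∘ σ) (σ.symm i))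

theorem maxValue_eq_maxValue_sub_add {v : T → ℝ} (hv : ∀ t, 0 ≤ v t) {α : ℝ} (hα : 0 ≤ α)
    (hαv : ∀ t, 0 < v t → α ≤ v t) (P : Fin m → T) :
    maxValue v P =
      maxValue (fun t => max (v t - α) 0) P + α * if ∃ i, 0 < v (P i) then 1 else 0 := by
  have hmono : Monotone fun a : ℝ => max (a - α) 0 := fun a b h => max_le_max (by linarith) le_rfl
  obtain ⟨i₀, hi₀⟩ := exists_eq_maxValue v P
  have hpos : (∃ i, 0 < v (P i)) ↔ 0 < maxValue v P :=
    ⟨fun ⟨i, hi⟩ => hi.trans_le (le_maxValue v P i), fun h => ⟨i₀, hi₀ ▸ h⟩⟩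
  rw [show (fun t => max (v t - α) 0) = (fun a => max (a - α) 0) ∘ v from rfl,
    maxValue_comp hmono, if_congr hpos rfl rfl]
  exact (max_sub_add_mul_ite_eq (hi₀ ▸ hv _) (hi₀ ▸ hαv _) hα).symm

noncomputable def topBidders (v : T → ℝ) (P : Fin m → T) : Finset (Fin m) :=
  {i | 0 < v (P i) ∧ v (P i) = maxValue v P}

noncomputable def uniformTop (v : T → ℝ) (P : Fin m → T) (i : Fin m) : ℝ :=
  if i ∈ topBidders v P then (#(topBidders v P) : ℝ)⁻¹ else 0

theorem uniformTop_mem_feasibleSet (v : T → ℝ) : uniformTop v ∈ feasibleSet m T := by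
  refine ⟨fun P i => ?_, fun P => ?_⟩
  · unfold uniformTop
    split_ifs <;> positivity
  · simp only [uniformTop, sum_ite_mem, univ_inter, sum_const, nsmul_eq_mul]
    exact mul_inv_le_one

theorem uniformTop_eq_zero {v : T → ℝ} {P : Fin m → T} {i : Fin m} (h : v (P i) ≤ 0) :
    uniformTop v P i = 0 :=
  if_neg fun hi => (mem_filter.1 hi).2.1.not_ge h

theorem sum_mul_uniformTop {v : T → ℝ} (hv : ∀ t, 0 ≤ v t) (P : Fin m → T) :
    ∑ i, v (P i) * uniformTop v P i = maxValue v P := by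
  have hterm : ∀ i, v (P i) * uniformTop v P i =
      if i ∈ topBidders v P then maxValue v P * (#(topBidders v P) : ℝ)⁻¹ else 0 := fun i => by
    unfold uniformTop
    split_ifs with h
    · rw [(mem_filter.1 h).2.2]
    · rw [mul_zero]
  rw [sum_congr rfl fun i _ => hterm i, sum_ite_mem, univ_inter, sum_const, nsmul_eq_mul]
  obtain ⟨i₀, hi₀⟩ := exists_eq_maxValue v P
  rcases (hv (P i₀)).lt_or_eq with hpos | hzero
  · have hmem : i₀ ∈ topBidders v P := mem_filter.2 ⟨mem_univ _, hpos, hi₀⟩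
    field_simp [(card_pos.2 ⟨i₀, hmem⟩).ne']
  · rw [← hi₀, ← hzero, zero_mul, mul_zero]

theorem uniformTop_comp_perm (v : T → ℝ) (σ : Equiv.Perm (Fin m)) (P : Fin m → T) (i : Fin m) :
    uniformTop v (P ∘ σ) i = uniformTop v P (σ i) := by
  have hmem : ∀ j, j ∈ topBidders v (P ∘ σ) ↔ σ j ∈ topBidders v P := fun j => by
    simp [topBidders, maxValue_comp_perm]
  simp only [uniformTop, hmem, card_equiv σ hmem]

end MaxValue

/-- A bidder of a type of probability zero gets the item with probability `π` when all other
bidders have types of positive probability. Every other profile containing such a type has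
probability zero for the remaining bidders, so this fixes the reduced form at null types to `π`
and leaves it unchanged elsewhere. -/
noncomputable def withNullTypes (μ π : T → ℝ) (ψ : (Fin m → T) → Fin m → ℝ)
    (P : Fin m → T) (i : Fin m) : ℝ :=
  if μ (P i) = 0 then (if ∀ j ≠ i, μ (P j) ≠ 0 then π (P i) else 0)
  else if ∀ j, μ (P j) ≠ 0 then ψ P i else 0

theorem withNullTypes_mem_feasibleSet {μ π : T → ℝ} (hπ0 : ∀ t, 0 ≤ π t) (hπ1 : ∀ t, π t ≤ 1)
    {ψ : (Fin m → T) → Fin m → ℝ} (hψ : ψ ∈ feasibleSet m T) :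
    withNullTypes μ π ψ ∈ feasibleSet m T := by
  refine ⟨fun P i => ?_, fun P => ?_⟩
  · unfold withNullTypes
    split_ifs
    exacts [hπ0 _, le_rfl, hψ.1 P i, le_rfl]
  by_cases hall : ∀ j, μ (P j) ≠ 0
  · simpa [withNullTypes, hall] using hψ.2 P
  push Not at hall
  obtain ⟨k, hk⟩ := hall
  rw [sum_eq_single k (fun i _ hik => ?_) (by simp)]
  · rw [withNullTypes, if_pos hk]
    split_ifs
    exacts [hπ1 _, zero_le_one]
  · have h₁ : ¬∀ j ≠ i, μ (P j) ≠ 0 := fun h => h k (Ne.symm hik) hk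
    have h₂ : ¬∀ j, μ (P j) ≠ 0 := fun h => h k hk
    rw [withNullTypes, if_neg h₁, if_neg h₂, ite_self]

variable [Fintype T]

theorem sum_prod_eq_one (μ : T → ℝ) (hμ1 : ∑ t, μ t = 1) :
    ∑ P : Fin m → T, ∏ j, μ (P j) = 1 := by
  simp [← Fintype.prod_sum, hμ1]

variable [DecidableEq T]

theorem sum_ite_forall_notMem_prod (μ : T → ℝ) (hμ1 : ∑ t, μ t = 1) (S : Finset T) :
    ∑ P : Fin m → T, (if ∀ i, P i ∉ S then ∏ j, μ (P j) else 0) = (1 - ∑ t ∈ S, μ t) ^ m := by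
  have hSc : ∑ t, (if t ∉ S then μ t else 0) = 1 - ∑ t ∈ S, μ t := by
    rw [← hμ1, ← sum_filter, ← sum_compl_add_sum S, add_sub_cancel_right]
    congr 1
    ext; simp
  rw [sum_congr rfl fun P _ => by convert Fintype.prod_ite_zero.symm]
  rw [← Fintype.prod_sum fun _ t => if t ∉ S then μ t else 0, hSc, prod_const, card_univ,
    Fintype.card_fin]

theorem sum_ite_exists_mem_prod (μ : T → ℝ) (hμ1 : ∑ t, μ t = 1) (S : Finset T) :
    ∑ P : Fin m → T, (if ∃ i, P i ∈ S then ∏ j, μ (P j) else 0) =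
      1 - (1 - ∑ t ∈ S, μ t) ^ m := by
  rw [← sum_ite_forall_notMem_prod μ hμ1 S, ← sum_prod_eq_one (m := m) μ hμ1, ← sum_sub_distrib]
  refine sum_congr rfl fun P _ => ?_
  by_cases h : ∃ i, P i ∈ S
  · rw [if_pos h, if_neg (by simpa using h), sub_zero]
  · rw [if_neg h, if_pos (by simpa using h), sub_self]

def reducedForm (μ : T → ℝ) : ((Fin m → T) → Fin m → ℝ) →ₗ[ℝ] Fin m → T → ℝ where
  toFun φ i A := ∑ P : Fin m → T, if P i = A then (∏ j ∈ univ.erase i, μ (P j)) * φ P i else 0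
  map_add' φ ψ := by
    ext i A
    simp only [Pi.add_apply, mul_add, ← sum_add_distrib]
    exact sum_congr rfl fun P _ => by split_ifs <;> simp
  map_smul' c φ := by
    ext i A
    simp only [Pi.smul_apply, smul_eq_mul, RingHom.id_apply, mul_sum]
    exact sum_congr rfl fun P _ => by split_ifs <;> ring

theorem reducedForm_apply (μ : T → ℝ) (φ : (Fin m → T) → Fin m → ℝ) (i : Fin m) (A : T) :
    reducedForm μ φ i A =
      ∑ P : Fin m → T, if P i = A then (∏ j ∈ univ.erase i, μ (P j)) * φ P i else 0 := rfl

theorem reducedForm_const (μ : T → ℝ) (hμ1 : ∑ t, μ t = 1) (c : ℝ) (i : Fin m) (A : T) :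
    reducedForm μ (fun _ _ => c) i A = c := by
  have hprod : ∀ P : Fin m → T, (if P i = A then (∏ j ∈ univ.erase i, μ (P j)) * c else 0) =
      c * ∏ j, if j = i then (if P j = A then 1 else 0) else μ (P j) := by
    intro P
    rw [← mul_prod_erase univ _ (mem_univ i), if_pos rfl,
      prod_congr rfl fun j hj => if_neg (ne_of_mem_erase hj)]
    split_ifs <;> ring
  rw [reducedForm_apply, sum_congr rfl fun P _ => hprod P, ← mul_sum,
    ← Fintype.prod_sum fun j t => if j = i then (if t = A then (1 : ℝ) else 0) else μ t,
    prod_eq_one fun j _ => ?_, mul_one]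
  split_ifs
  · simp
  · exact hμ1

theorem reducedForm_congr (μ : T → ℝ) {φ ψ : (Fin m → T) → Fin m → ℝ} {i : Fin m} {A : T}
    (h : ∀ P : Fin m → T, P i = A → (∀ j ≠ i, μ (P j) ≠ 0) → φ P i = ψ P i) :
    reducedForm μ φ i A = reducedForm μ ψ i A := by
  refine sum_congr rfl fun P _ => ?_
  split_ifs with hPi
  by_cases hP : ∀ j ≠ i, μ (P j) ≠ 0
  · rw [h P hPi hP]
  · push Not at hP
    obtain ⟨j, hji, hj⟩ := hP
    rw [prod_eq_zero (i := j) (mem_erase.2 ⟨hji, mem_univ j⟩) hj, zero_mul, zero_mul]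
  · rfl

theorem reducedForm_eq_zero (μ : T → ℝ) {φ : (Fin m → T) → Fin m → ℝ} {i : Fin m} {A : T}
    (h : ∀ P : Fin m → T, P i = A → φ P i = 0) : reducedForm μ φ i A = 0 :=
  sum_eq_zero fun P _ => by split_ifs with hPi <;> simp [h P, hPi]

theorem reducedForm_eq_of_perm (μ : T → ℝ) {φ : (Fin m → T) → Fin m → ℝ}
    (hφ : ∀ (σ : Equiv.Perm (Fin m)) (P : Fin m → T) (i : Fin m), φ (P ∘ σ) i = φ P (σ i))
    (i k : Fin m) : reducedForm μ φ i = reducedForm μ φ k := by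
  ext A
  let e : (Fin m → T) ≃ (Fin m → T) := (Equiv.swap i k).arrowCongr (Equiv.refl T)
  have he : ∀ P, e P = P ∘ Equiv.swap i k := fun P => by ext; simp [e, Equiv.symm_swap]
  refine Fintype.sum_equiv e _ _ fun P => ?_
  have hprod : ∏ j ∈ univ.erase i, μ (P j) = ∏ j ∈ univ.erase k, μ (e P j) := by
    refine prod_equiv (Equiv.swap i k) (fun j => ?_) fun j _ => ?_
    · simp [Equiv.swap_apply_eq_iff]
    · simp [he]
  simp only [hprod, he, hφ, Function.comp_apply, Equiv.swap_apply_right]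

theorem reducedForm_withNullTypes (μ π : T → ℝ) (hμ1 : ∑ t, μ t = 1)
    (ψ : (Fin m → T) → Fin m → ℝ) (i : Fin m) (A : T) :
    reducedForm μ (withNullTypes μ π ψ) i A =
      if μ A = 0 then π A else reducedForm μ ψ i A := by
  split_ifs with hA
  · rw [← reducedForm_const μ hμ1 (π A) i A]
    exact reducedForm_congr μ fun P hPi hP => by rw [withNullTypes, hPi, if_pos hA, if_pos hP]
  · refine reducedForm_congr μ fun P hPi hP => ?_
    have hall : ∀ j, μ (P j) ≠ 0 := fun j => by
      by_cases hj : j = i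
      · rwa [hj, hPi]
      · exact hP j hj
    rw [withNullTypes, if_neg (hall i), if_pos hall]

theorem sum_mul_reducedForm (μ g : T → ℝ) (φ : (Fin m → T) → Fin m → ℝ) (i : Fin m) :
    ∑ A, g A * μ A * reducedForm μ φ i A =
      ∑ P : Fin m → T, (∏ j, μ (P j)) * (g (P i) * φ P i) := by
  simp_rw [reducedForm_apply, mul_sum, mul_ite, mul_zero]
  rw [sum_comm]
  refine sum_congr rfl fun P _ => ?_
  rw [sum_ite_eq, if_pos (mem_univ _), ← mul_prod_erase univ (fun j => μ (P j)) (mem_univ i)]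
  ring

theorem card_mul_sum_eq_of_reducedForm_eq (μ g : T → ℝ) {φ : (Fin m → T) → Fin m → ℝ}
    {x : T → ℝ} (hx : ∀ i, reducedForm μ φ i = x) :
    (m : ℝ) * ∑ A, g A * μ A * x A =
      ∑ P : Fin m → T, (∏ j, μ (P j)) * ∑ i, g (P i) * φ P i := by
  calc (m : ℝ) * ∑ A, g A * μ A * x A
      = ∑ i : Fin m, ∑ A, g A * μ A * reducedForm μ φ i A := by simp [hx]
    _ = ∑ i : Fin m, ∑ P : Fin m → T, (∏ j, μ (P j)) * (g (P i) * φ P i) :=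
        sum_congr rfl fun i _ => sum_mul_reducedForm μ g φ i
    _ = ∑ P : Fin m → T, (∏ j, μ (P j)) * ∑ i, g (P i) * φ P i := by
        rw [sum_comm]; simp_rw [mul_sum]

theorem card_mul_sum_le_of_mem_feasibleSet (μ : T → ℝ) (hμ0 : ∀ t, 0 ≤ μ t)
    (hμ1 : ∑ t, μ t = 1) {φ : (Fin m → T) → Fin m → ℝ} (hφ : φ ∈ feasibleSet m T)
    {x : T → ℝ} (hx : ∀ i, reducedForm μ φ i = x) (S : Finset T) :
    (m : ℝ) * ∑ t ∈ S, x t * μ t ≤ 1 - (1 - ∑ t ∈ S, μ t) ^ m := by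
  calc (m : ℝ) * ∑ t ∈ S, x t * μ t
      = m * ∑ A, (if A ∈ S then 1 else 0) * μ A * x A := by
        simp only [ite_mul, one_mul, zero_mul, sum_ite_mem, univ_inter, _root_.mul_comm (μ _)]
    _ = ∑ P : Fin m → T, (∏ j, μ (P j)) * ∑ i, (if P i ∈ S then 1 else 0) * φ P i :=
        card_mul_sum_eq_of_reducedForm_eq μ _ hx
    _ ≤ ∑ P : Fin m → T, (∏ j, μ (P j)) * if ∃ i, P i ∈ S then 1 else 0 :=
        sum_le_sum fun P _ => mul_le_mul_of_nonneg_left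
          (sum_boole_mul_le_of_mem_feasibleSet hφ S P) (prod_nonneg fun j _ => hμ0 _)
    _ = 1 - (1 - ∑ t ∈ S, μ t) ^ m := by
        simp_rw [mul_boole]
        exact sum_ite_exists_mem_prod μ hμ1 S

noncomputable def expectedMax (m : ℕ) [Nonempty (Fin m)] (μ v : T → ℝ) : ℝ :=
  ∑ P : Fin m → T, (∏ j, μ (P j)) * maxValue v P

theorem expectedMax_eq_expectedMax_sub_add [Nonempty (Fin m)] (μ : T → ℝ)
    (hμ1 : ∑ t, μ t = 1) {v : T → ℝ} (hv : ∀ t, 0 ≤ v t) {α : ℝ} (hα : 0 ≤ α)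
    (hαv : ∀ t, 0 < v t → α ≤ v t) :
    expectedMax m μ v = expectedMax m μ (fun t => max (v t - α) 0) +
      α * (1 - (1 - ∑ t ∈ {t | 0 < v t}, μ t) ^ m) := by
  rw [← sum_ite_exists_mem_prod μ hμ1, expectedMax, expectedMax, mul_sum, ← sum_add_distrib]
  refine sum_congr rfl fun P _ => ?_
  rw [maxValue_eq_maxValue_sub_add hv hα hαv P]
  simp only [mem_filter, mem_univ, true_and]
  split_ifs <;> ring

theorem card_mul_sum_le_expectedMax [Nonempty (Fin m)] (μ π : T → ℝ) (hμ1 : ∑ t, μ t = 1)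
    (hB : ∀ S : Finset T, (m : ℝ) * ∑ t ∈ S, π t * μ t ≤ 1 - (1 - ∑ t ∈ S, μ t) ^ m)
    {v : T → ℝ} (hv : ∀ t, 0 ≤ v t) :
    (m : ℝ) * ∑ t, v t * (π t * μ t) ≤ expectedMax m μ v := by
  induction hn : #{t | 0 < v t} using Nat.strong_induction_on generalizing v with
  | _ n ih =>
  set S : Finset T := {t | 0 < v t} with hS
  obtain hSe | hSne := S.eq_empty_or_nonempty
  · have hv0 : ∀ t, v t = 0 := fun t => by
      have ht : t ∉ S := by simp [hSe]
      simp only [hS, mem_filter, mem_univ, true_and, not_lt] at ht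
      exact le_antisymm ht (hv t)
    have hmax : ∀ P : Fin m → T, maxValue v P = 0 := fun P => by
      obtain ⟨i, hi⟩ := exists_eq_maxValue v P
      rw [← hi, hv0]
    simp [expectedMax, hv0, hmax]
  -- Peel off the least positive value `α`: `v = (v - α)⁺ + α • 1_S`, and `(v - α)⁺` has
  -- smaller support.
  obtain ⟨t₀, ht₀, hαt₀⟩ := exists_mem_eq_inf' hSne v
  set α := S.inf' hSne v
  have hαv : ∀ t, 0 < v t → α ≤ v t := fun t ht => inf'_le v (by simpa [hS] using ht)
  have hα : 0 < α := hαt₀ ▸ (by simpa [hS] using ht₀)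
  set v₁ : T → ℝ := fun t => max (v t - α) 0
  have hlt : #{t | 0 < v₁ t} < n := by
    refine hn ▸ card_lt_card ((ssubset_iff_of_subset fun t ht => ?_).2 ⟨t₀, ht₀, ?_⟩)
    · simp only [v₁, mem_filter, mem_univ, true_and, lt_max_iff, lt_irrefl, or_false] at ht
      rw [hS, mem_filter]
      exact ⟨mem_univ t, by linarith⟩
    · simp [v₁, ← hαt₀]
  have hv_eq : ∀ t, v t = v₁ t + α * if 0 < v t then 1 else 0 := fun t =>
    (max_sub_add_mul_ite_eq (hv t) (hαv t) hα.le).symm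
  have hmemS : ∀ t, t ∈ S ↔ 0 < v t := fun t => by simp [hS]
  have hL : (m : ℝ) * ∑ t, v t * (π t * μ t) =
      m * ∑ t, v₁ t * (π t * μ t) + α * (m * ∑ t ∈ S, π t * μ t) := by
    have hsplit : ∀ t, v t * (π t * μ t) =
        v₁ t * (π t * μ t) + α * if t ∈ S then π t * μ t else 0 := fun t => by
      rw [if_congr (hmemS t) rfl rfl]
      nth_rw 1 [hv_eq t]
      split_ifs <;> ring
    rw [sum_congr rfl fun t _ => hsplit t, sum_add_distrib, ← mul_sum, sum_ite_mem, univ_inter]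
    ring
  have hR : expectedMax m μ v = expectedMax m μ v₁ + α * (1 - (1 - ∑ t ∈ S, μ t) ^ m) :=
    expectedMax_eq_expectedMax_sub_add μ hμ1 hv hα.le hαv
  rw [hL, hR]
  linarith [ih _ hlt (fun t => le_max_right _ _) rfl, mul_le_mul_of_nonneg_left (hB S) hα.le]

theorem sum_mul_le_sum_mul_reducedForm_uniformTop [Nonempty (Fin m)] (μ π : T → ℝ)
    (hμ1 : ∑ t, μ t = 1)
    (hB : ∀ S : Finset T, (m : ℝ) * ∑ t ∈ S, π t * μ t ≤ 1 - (1 - ∑ t ∈ S, μ t) ^ m)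
    {v : T → ℝ} (hv : ∀ t, 0 ≤ v t) (i : Fin m) :
    ∑ A, v A * (π A * μ A) ≤ ∑ A, v A * μ A * reducedForm μ (uniformTop v) i A := by
  have hm : (0 : ℝ) < m := by exact_mod_cast Fin.pos i
  refine le_of_mul_le_mul_left ?_ hm
  calc (m : ℝ) * ∑ A, v A * (π A * μ A) ≤ expectedMax m μ v :=
        card_mul_sum_le_expectedMax μ π hμ1 hB hv
    _ = m * ∑ A, v A * μ A * reducedForm μ (uniformTop v) i A := by
        rw [card_mul_sum_eq_of_reducedForm_eq μ v
          fun k => reducedForm_eq_of_perm μ (uniformTop_comp_perm v) k i, expectedMax]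
        simp_rw [sum_mul_uniformTop hv]

theorem exists_mem_feasibleSet_reducedForm_ge [Nonempty (Fin m)] (μ π : T → ℝ)
    (hμ0 : ∀ t, 0 ≤ μ t) (hμ1 : ∑ t, μ t = 1) (hπ0 : ∀ t, 0 ≤ π t) (hπ1 : ∀ t, π t ≤ 1)
    (hB : ∀ S : Finset T, (m : ℝ) * ∑ t ∈ S, π t * μ t ≤ 1 - (1 - ∑ t ∈ S, μ t) ^ m)
    (g : (T → ℝ) →ₗ[ℝ] ℝ) :
    ∃ φ ∈ feasibleSet m T, ∃ x : T → ℝ, (∀ i, reducedForm μ φ i = x) ∧ g π ≤ g x := by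
  set c : T → ℝ := fun A => g fun t => if A = t then 1 else 0
  -- `x / 0 = 0` makes `v` vanish on types of probability zero.
  set v : T → ℝ := fun A => max (c A) 0 / μ A
  have hv : ∀ t, 0 ≤ v t := fun t => div_nonneg (le_max_right _ _) (hμ0 t)
  let i₀ : Fin m := Classical.arbitrary _
  have hsymm : ∀ i, reducedForm μ (uniformTop v) i = reducedForm μ (uniformTop v) i₀ :=
    fun i => reducedForm_eq_of_perm μ (uniformTop_comp_perm v) i i₀
  set y := reducedForm μ (uniformTop v) i₀
  set x : T → ℝ := fun A => if μ A = 0 then π A else y A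
  refine ⟨withNullTypes μ π (uniformTop v),
    withNullTypes_mem_feasibleSet hπ0 hπ1 (uniformTop_mem_feasibleSet v), x,
    fun i => funext fun A => by rw [reducedForm_withNullTypes μ π hμ1, hsymm], ?_⟩
  have hπ_le : ∀ A, π A * c A ≤ (if μ A = 0 then π A * c A else 0) + v A * (π A * μ A) :=
    fun A => by
      split_ifs with hA
      · simp [v, hA]
      · rw [zero_add, show v A * (π A * μ A) = π A * (v A * μ A) by ring, div_mul_cancel₀ _ hA]
        exact mul_le_mul_of_nonneg_left (le_max_left _ _) (hπ0 A)
  have hx_eq : ∀ A, x A * c A = (if μ A = 0 then π A * c A else 0) + v A * μ A * y A :=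
    fun A => by
      simp only [x]
      split_ifs with hA
      · simp [v, hA]
      · rw [zero_add, div_mul_cancel₀ _ hA]
        rcases le_total (c A) 0 with hc | hc
        · have hvA : v A ≤ 0 := div_nonpos_of_nonpos_of_nonneg (max_eq_right hc).le (hμ0 A)
          have hyA : y A = 0 :=
            reducedForm_eq_zero μ fun P hP => uniformTop_eq_zero (by rw [hP]; exact hvA)
          rw [max_eq_right hc, hyA]
          ring
        · rw [max_eq_left hc, mul_comm]
  have hlayer := sum_mul_le_sum_mul_reducedForm_uniformTop μ π hμ1 hB hv i₀
  simp only [g.pi_apply_eq_sum_univ π, g.pi_apply_eq_sum_univ x, smul_eq_mul]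
  calc ∑ A, π A * c A
      ≤ ∑ A, ((if μ A = 0 then π A * c A else 0) + v A * (π A * μ A)) :=
        sum_le_sum fun A _ => hπ_le A
    _ ≤ ∑ A, ((if μ A = 0 then π A * c A else 0) + v A * μ A * y A) := by
        simp only [sum_add_distrib]
        linarith
    _ = ∑ A, x A * c A := sum_congr rfl fun A _ => (hx_eq A).symm

end Border

open Border

theorem stmt_1_general {T : Type*} [Fintype T] [DecidableEq T]
    (m : ℕ)
    (μ : T → ℝ) (hμ0 : ∀ t, 0 ≤ μ t) (hμ1 : ∑ t, μ t = 1)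
    (π : T → ℝ) (hπ0 : ∀ t, 0 ≤ π t) (hπ1 : ∀ t, π t ≤ 1) :
    (∃ φ : (Fin m → T) → Fin m → ℝ,
        (∀ P i, 0 ≤ φ P i) ∧ (∀ P, ∑ i, φ P i ≤ 1) ∧
        (∀ (i : Fin m) (A : T),
          (∑ P : Fin m → T,
            if P i = A then (∏ j ∈ Finset.univ.erase i, μ (P j)) * φ P i else 0) = π A)) ↔
    (∀ S : Finset T,
      (m : ℝ) * ∑ t ∈ S, π t * μ t ≤ 1 - (1 - ∑ t ∈ S, μ t) ^ m) := by
  constructor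
  · rintro ⟨φ, hφ0, hφ1, hφπ⟩
    exact card_mul_sum_le_of_mem_feasibleSet μ hμ0 hμ1 ⟨hφ0, hφ1⟩ fun i => funext (hφπ i)
  intro hB
  cases isEmpty_or_nonempty (Fin m)
  · exact ⟨0, fun _ _ => le_rfl, fun _ => by simp, fun i => isEmptyElim i⟩
  by_contra hπ
  have hπ_notMem : (fun _ => π) ∉ reducedForm μ '' feasibleSet m T := by
    rintro ⟨φ, ⟨hφ0, hφ1⟩, hφπ⟩
    exact hπ ⟨φ, hφ0, hφ1, fun i A => congrFun (congrFun hφπ i) A⟩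
  obtain ⟨f, u, hf, hfπ⟩ := geometric_hahn_banach_closed_point
    (convex_feasibleSet.linear_image _)
    (isCompact_feasibleSet.image (reducedForm μ).continuous_of_finiteDimensional).isClosed
    hπ_notMem
  obtain ⟨φ, hφ, x, hx, hle⟩ := exists_mem_feasibleSet_reducedForm_ge μ π hμ0 hμ1 hπ0 hπ1 hB
    (f.toLinearMap ∘ₗ LinearMap.pi fun _ => LinearMap.id)
  exact (hf _ ⟨φ, hφ, funext hx⟩).not_ge (hfπ.le.trans hle)

/-- Border's theorem: for `m` i.i.d. bidders with types drawn from `μ` on a finite type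
space `T` and a single item, a bidder-symmetric reduced form `π : T → [0,1]` is feasible
(i.e. induced by some ex-post allocation rule `φ` that never over-allocates the item)
if and only if for every subset `S ⊆ T`,
`m · Σ_{t∈S} π(t)·Pr[t] ≤ 1 − (1 − Pr[t ∈ S])^m`. -/
theorem stmt_1 {T : Type*} [Fintype T] [DecidableEq T]
    (m : ℕ) (hm : 0 < m)
    (μ : T → ℝ) (hμ0 : ∀ t, 0 ≤ μ t) (hμ1 : ∑ t, μ t = 1)
    (π : T → ℝ) (hπ0 : ∀ t, 0 ≤ π t) (hπ1 : ∀ t, π t ≤ 1) :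
    (∃ φ : (Fin m → T) → Fin m → ℝ,
        (∀ P i, 0 ≤ φ P i) ∧ (∀ P, ∑ i, φ P i ≤ 1) ∧
        (∀ (i : Fin m) (A : T),
          (∑ P : Fin m → T,
            if P i = A then (∏ j ∈ Finset.univ.erase i, μ (P j)) * φ P i else 0) = π A)) ↔
    (∀ S : Finset T,
      (m : ℝ) * ∑ t ∈ S, π t * μ t ≤ 1 - (1 - ∑ t ∈ S, μ t) ^ m) :=
  stmt_1_general m μ hμ0 hμ1 π hπ0 hπ1
end

section
/- For m i.i.d. bidders with finite type space T, a bidder-symmetric reduced form π is feasible if and only if for every x, the threshold set S_x = {A ∈ T : π(A) > x} satisfies Border's inequality m · Σ_{t∈S_x} π(t)·Pr[t] ≤ 1 − (1 − Pr[t ∈ S_x])^m. Equivalently, it suffices to check Border's condition only on the (at most |T|) sets of the form S_x. -/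
/-!
Necessity: the probability that the item goes to a bidder whose type lies in `S` is at most the
probability that some bidder has a type in `S`.

Sufficiency: first, Border's inequality for an arbitrary `S` follows from the one for the
threshold set `S_x` with `x = (1 - μ(S))^(m-1)`, because `∑_S (π - x) μ ≤ ∑_{S_x} (π - x) μ`
and `m x` is the slope at `μ(S)` of the concave right-hand side `1 - (1 - s)^m`. Second,
Border's inequalities for all sets give feasibility by duality: if `m π` were not the sum over
bidders of the interim allocations of some (possibly asymmetric) allocation, a separating
functional `γ` would give `m ∑ γ π > ∑_P max(0, maxᵢ ∏_{j ≠ i} μ(P j) γ(P i))`, the value of the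
greedy allocation. Decomposing `γ / μ` into layers `b • 1_V` over its upper level sets `V`
reduces the reverse inequality to Border's inequality on each `V`. Averaging the allocation over
the cyclic relabellings of the bidders makes it symmetric.
-/

open Finset

lemma pow_add_mul_sub_le_pow {a b : ℝ} (ha : 0 ≤ a) (hb : 0 ≤ b) (n : ℕ) :
    a ^ (n + 1) + (n + 1) * a ^ n * (b - a) ≤ b ^ (n + 1) := by
  induction n with
  | zero => simp
  | succ n ih =>
    have hsq : 0 ≤ (n + 1) * a ^ n * (b - a) ^ 2 := by positivity
    calc a ^ (n + 1 + 1) + ((n + 1 : ℕ) + 1) * a ^ (n + 1) * (b - a)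
        ≤ b * (a ^ (n + 1) + (n + 1) * a ^ n * (b - a)) := by
          push_cast; ring_nf; nlinarith
      _ ≤ b * b ^ (n + 1) := mul_le_mul_of_nonneg_left ih hb
      _ = b ^ (n + 1 + 1) := by ring

lemma sum_ite_mul_le_ite_exists {ι : Type*} [Fintype ι] {p : ι → Prop} [DecidablePred p]
    [Decidable (∃ i, p i)] {c : ℝ} (hc : 0 ≤ c) {y : ι → ℝ} (hy0 : ∀ i, 0 ≤ y i)
    (hy1 : ∑ i, y i ≤ 1) :
    ∑ i, (if p i then c * y i else 0) ≤ if ∃ i, p i then c else 0 := by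
  split_ifs with h
  · calc ∑ i, (if p i then c * y i else 0) ≤ ∑ i, c * y i :=
          sum_le_sum fun i _ => by split_ifs <;> simp [mul_nonneg hc (hy0 i)]
      _ = c * ∑ i, y i := (mul_sum _ _ _).symm
      _ ≤ c := mul_le_of_le_one_right hc hy1
  · push Not at h
    simp [h]

lemma fold_max_mul_left {ι : Type*} (s : Finset ι) (f : ι → ℝ) {c : ℝ} (hc : 0 ≤ c) :
    s.fold max 0 (fun i => c * f i) = c * s.fold max 0 f := by
  simpa using fold_hom (s := s) (op := max) (op' := max) (b := 0) (f := f) (m := (c * ·))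
    fun x y => mul_max_of_nonneg x y hc

lemma fold_max_eq_fold_max_sub_add {ι : Type*} [Fintype ι] (f : ι → ℝ) {b : ℝ} (hb : 0 < b)
    (hf : ∀ i, 0 < f i → b ≤ f i) :
    univ.fold max 0 f
      = univ.fold max 0 (fun i => f i - if 0 < f i then b else 0)
        + if ∃ i, 0 < f i then b else 0 := by
  set g := fun i => f i - if 0 < f i then b else 0
  have hg0 : 0 ≤ univ.fold max 0 g := (le_fold_max _).2 (Or.inl le_rfl)
  have hle : ∀ i, f i ≤ univ.fold max 0 f := fun i =>
    (le_fold_max _).2 (Or.inr ⟨i, mem_univ i, le_rfl⟩)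
  have hgle : ∀ i, g i ≤ univ.fold max 0 g := fun i =>
    (le_fold_max _).2 (Or.inr ⟨i, mem_univ i, le_rfl⟩)
  split_ifs with h
  · obtain ⟨i₀, hi₀⟩ := h
    refine le_antisymm ((fold_max_le _).2 ⟨by linarith, fun i _ => ?_⟩) ?_
    · by_cases hi : 0 < f i
      · linarith [hgle i, show g i = f i - b by simp [g, hi]]
      · linarith
    · suffices univ.fold max 0 g ≤ univ.fold max 0 f - b by linarith
      refine (fold_max_le _).2 ⟨by linarith [hf i₀ hi₀, hle i₀], fun i _ => ?_⟩
      by_cases hi : 0 < f i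
      · simp only [g, hi, if_true]; linarith [hle i]
      · simp only [g, hi, if_false, sub_zero]; linarith [hf i₀ hi₀, hle i₀]
  · push Not at h
    rw [add_zero]
    exact fold_congr fun i _ => by simp [g, not_lt.2 (h i)]

lemma prod_mul_fold_max_div_add_sum_le {ι : Type*} [Fintype ι] [DecidableEq ι] {p : ι → ℝ}
    (hp : ∀ i, 0 ≤ p i) (g : ι → ℝ) :
    (∏ j, p j) * univ.fold max 0 (fun i => g i / p i)
      + ∑ i, (if p i = 0 then max 0 (g i) else 0) * ∏ j ∈ univ.erase i, p j
      ≤ univ.fold max 0 (fun i => (∏ j ∈ univ.erase i, p j) * g i) := by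
  by_cases hzero : ∃ i₀, p i₀ = 0
  · obtain ⟨i₀, hi₀⟩ := hzero
    -- only the zero-mass index `i₀` itself can contribute: every other term contains `p i₀`
    rw [prod_eq_zero (mem_univ i₀) hi₀, zero_mul, zero_add,
      sum_eq_single i₀ fun i _ hi => ?_ , if_pos hi₀]
    · calc max 0 (g i₀) * ∏ j ∈ univ.erase i₀, p j
          = max 0 ((∏ j ∈ univ.erase i₀, p j) * g i₀) := by
            rw [mul_comm, mul_max_of_nonneg _ _ (prod_nonneg fun j _ => hp j), mul_zero]
        _ ≤ _ := max_le ((le_fold_max _).2 (Or.inl le_rfl))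
            ((le_fold_max _).2 (Or.inr ⟨i₀, mem_univ _, le_rfl⟩))
    · simp
    · rw [prod_eq_zero (mem_erase.2 ⟨fun h => hi h.symm, mem_univ i₀⟩) hi₀, mul_zero]
  · push Not at hzero
    simp only [hzero, if_false, zero_mul, sum_const_zero, add_zero]
    rw [← fold_max_mul_left _ _ (prod_nonneg fun j _ => hp j)]
    refine le_of_eq (fold_congr fun i _ => ?_)
    rw [← mul_prod_erase univ p (mem_univ i)]
    field_simp [hzero i]

lemma exists_fold_max_le_sum_mul {ι : Type*} [Fintype ι] [Nonempty ι] [DecidableEq ι]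
    (w : ι → ℝ) :
    ∃ y : ι → ℝ, ((∀ i, 0 ≤ y i) ∧ ∑ i, y i ≤ 1) ∧ univ.fold max 0 w ≤ ∑ i, w i * y i := by
  obtain ⟨i₀, -, hi₀⟩ := exists_max_image univ w univ_nonempty
  by_cases hpos : 0 ≤ w i₀
  · refine ⟨Pi.single i₀ 1, ⟨fun i => ?_, by simp⟩, ?_⟩
    · by_cases h : i = i₀ <;> simp [h]
    · simpa [Pi.single_apply] using (fold_max_le _).2 ⟨hpos, fun i _ => hi₀ i (mem_univ i)⟩
  · refine ⟨0, ⟨fun i => le_rfl, by simp⟩, ?_⟩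
    simpa using (fold_max_le _).2
      ⟨le_rfl, fun i _ => (hi₀ i (mem_univ i)).trans (not_le.1 hpos).le⟩

section Border

variable {T : Type*} {m : ℕ}

def allocations (T : Type*) (m : ℕ) : Set ((Fin m → T) → Fin m → ℝ) :=
  {φ | (∀ P i, 0 ≤ φ P i) ∧ ∀ P, ∑ i, φ P i ≤ 1}

lemma isCompact_allocations : IsCompact (allocations T m) := by
  refine (isCompact_univ_pi fun _ => isCompact_univ_pi fun _ =>
    isCompact_Icc (a := (0 : ℝ)) (b := 1)).of_isClosed_subset ?_ ?_
  · simp only [allocations, Set.ofPred_and, Set.ofPred_forall]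
    exact (isClosed_iInter fun P => isClosed_iInter fun i =>
      isClosed_le continuous_const (by fun_prop)).inter
        (isClosed_iInter fun P => isClosed_le (by fun_prop) continuous_const)
  · exact fun φ hφ P _ i _ => ⟨hφ.1 P i,
      (single_le_sum (fun j _ => hφ.1 P j) (mem_univ i)).trans (hφ.2 P)⟩

lemma convex_allocations : Convex ℝ (allocations T m) := by
  intro φ hφ ψ hψ a b ha hb hab
  refine ⟨fun P i => ?_, fun P => ?_⟩
  · simpa using add_nonneg (mul_nonneg ha (hφ.1 P i)) (mul_nonneg hb (hψ.1 P i))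
  · simp only [Pi.add_apply, Pi.smul_apply, smul_eq_mul, sum_add_distrib, ← mul_sum]
    nlinarith [hφ.2 P, hψ.2 P]

variable [Fintype T]

def interimAlloc [DecidableEq T] (μ : T → ℝ) (φ : (Fin m → T) → Fin m → ℝ) (i : Fin m) (A : T) :
    ℝ :=
  ∑ P : Fin m → T, if P i = A then (∏ j ∈ univ.erase i, μ (P j)) * φ P i else 0

def BorderIneq (m : ℕ) (μ π : T → ℝ) (S : Finset T) : Prop :=
  (m : ℝ) * ∑ t ∈ S, π t * μ t ≤ 1 - (1 - ∑ t ∈ S, μ t) ^ m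

lemma sum_prod_ite_exists_mem [DecidableEq T] {μ : T → ℝ} (hμ1 : ∑ t, μ t = 1)
    (S : Finset T) :
    ∑ P : Fin m → T, (if ∃ i, P i ∈ S then ∏ j, μ (P j) else 0)
      = 1 - (1 - ∑ t ∈ S, μ t) ^ m := by
  have hsplit : ∀ P : Fin m → T, (if ∃ i, P i ∈ S then ∏ j, μ (P j) else 0)
      = ∏ j, μ (P j) - if P ∈ Fintype.piFinset (fun _ => Sᶜ) then ∏ j, μ (P j) else 0 := by
    intro P
    split_ifs with h1 h2 h2 <;> simp_all [Fintype.mem_piFinset]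
  rw [sum_congr rfl fun P _ => hsplit P, sum_sub_distrib, sum_ite_mem, univ_inter,
    ← Fintype.sum_pow, ← sum_pow', hμ1, one_pow, ← hμ1, ← sum_compl_add_sum S,
    add_sub_cancel_right]

lemma sum_mul_prod_erase {μ : T → ℝ} (hμ1 : ∑ t, μ t = 1) (g : T → ℝ) (i : Fin m) :
    ∑ P : Fin m → T, g (P i) * ∏ j ∈ univ.erase i, μ (P j) = ∑ t, g t := by
  let h : Fin m → T → ℝ := fun j t => if j = i then g t else μ t
  have hprod : ∀ P : Fin m → T, g (P i) * ∏ j ∈ univ.erase i, μ (P j) = ∏ j, h j (P j) := by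
    intro P
    rw [← mul_prod_erase univ _ (mem_univ i)]
    simp only [h, if_pos]
    congr 1
    exact prod_congr rfl fun j hj => (if_neg (ne_of_mem_erase hj)).symm
  rw [sum_congr rfl fun P _ => hprod P, ← Fintype.prod_sum]
  simp [h, hμ1]

lemma sum_mul_interimAlloc [DecidableEq T] (μ γ : T → ℝ) (φ : (Fin m → T) → Fin m → ℝ)
    (i : Fin m) :
    ∑ A, γ A * interimAlloc μ φ i A
      = ∑ P : Fin m → T, (∏ j ∈ univ.erase i, μ (P j)) * γ (P i) * φ P i := by
  simp only [interimAlloc, mul_sum, mul_ite, mul_zero]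
  rw [sum_comm]
  refine sum_congr rfl fun P _ => ?_
  rw [sum_ite_eq]
  simp only [mem_univ, if_true]
  ring

lemma border_of_feasible [DecidableEq T] {μ π : T → ℝ} (hμ0 : ∀ t, 0 ≤ μ t)
    (hμ1 : ∑ t, μ t = 1) {φ : (Fin m → T) → Fin m → ℝ} (hφ : φ ∈ allocations T m)
    (hπ : ∀ i A, interimAlloc μ φ i A = π A) (S : Finset T) : BorderIneq m μ π S := by
  have hbidder : ∀ i, ∑ t ∈ S, π t * μ t
      = ∑ P : Fin m → T, if P i ∈ S then (∏ j, μ (P j)) * φ P i else 0 := by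
    intro i
    have h := sum_mul_interimAlloc μ (fun t => if t ∈ S then μ t else 0) φ i
    simp only [ite_mul, zero_mul, sum_ite_mem, univ_inter, hπ, mul_ite, mul_zero] at h
    simp only [prod_erase_mul _ _ (mem_univ i), mul_comm (μ _)] at h
    exact h
  calc (m : ℝ) * ∑ t ∈ S, π t * μ t
      = ∑ P : Fin m → T, ∑ i, if P i ∈ S then (∏ j, μ (P j)) * φ P i else 0 := by
        rw [sum_comm, ← sum_congr rfl fun i _ => hbidder i, sum_const, card_univ,
          Fintype.card_fin, nsmul_eq_mul]
    _ ≤ ∑ P : Fin m → T, if ∃ i, P i ∈ S then ∏ j, μ (P j) else 0 :=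
        sum_le_sum fun P _ => sum_ite_mul_le_ite_exists (prod_nonneg fun j _ => hμ0 _)
          (fun i => hφ.1 P i) (hφ.2 P)
    _ = 1 - (1 - ∑ t ∈ S, μ t) ^ m := sum_prod_ite_exists_mem hμ1 S

lemma sum_sub_mul_le_sum_filter_lt {μ : T → ℝ} (hμ0 : ∀ t, 0 ≤ μ t) (π : T → ℝ) (x : ℝ)
    (S : Finset T) :
    ∑ t ∈ S, (π t - x) * μ t ≤ ∑ t ∈ univ.filter (fun t => x < π t), (π t - x) * μ t := by
  calc ∑ t ∈ S, (π t - x) * μ t ≤ ∑ t ∈ S.filter (fun t => x < π t), (π t - x) * μ t := by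
        rw [← sum_filter_add_sum_filter_not S (fun t => x < π t)]
        refine add_le_of_nonpos_right (sum_nonpos fun t ht => ?_)
        exact mul_nonpos_of_nonpos_of_nonneg
          (sub_nonpos.2 (not_lt.1 (mem_filter.1 ht).2)) (hμ0 t)
    _ ≤ _ := sum_le_sum_of_subset_of_nonneg (filter_subset_filter _ (subset_univ S))
        fun t ht _ => mul_nonneg (sub_nonneg.2 (mem_filter.1 ht).2.le) (hμ0 t)

lemma border_of_border_threshold {μ π : T → ℝ} (hm : 0 < m) (hμ0 : ∀ t, 0 ≤ μ t)
    (hμ1 : ∑ t, μ t = 1) (h : ∀ x : ℝ, BorderIneq m μ π (univ.filter fun t => x < π t))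
    (S : Finset T) : BorderIneq m μ π S := by
  have hmass : ∀ U : Finset T, ∑ t ∈ U, μ t ≤ 1 := fun U =>
    hμ1 ▸ sum_le_sum_of_subset_of_nonneg (subset_univ U) fun t _ _ => hμ0 t
  obtain ⟨n, rfl⟩ := Nat.exists_eq_add_one.mpr hm
  -- `(n + 1) * x` is the slope of the concave map `s ↦ 1 - (1 - s) ^ (n + 1)` at the mass of `S`
  set x := (1 - ∑ t ∈ S, μ t) ^ n
  have hrearr := mul_le_mul_of_nonneg_left (sum_sub_mul_le_sum_filter_lt hμ0 π x S)
    (by positivity : (0 : ℝ) ≤ n + 1)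
  have htangent := pow_add_mul_sub_le_pow (sub_nonneg.2 (hmass S))
    (sub_nonneg.2 (hmass (univ.filter fun t => x < π t))) n
  have hx := h x
  unfold BorderIneq at hx ⊢
  simp only [sub_mul, sum_sub_distrib, ← mul_sum] at hrearr
  push_cast at hx ⊢
  linarith

lemma mul_sum_le_sum_prod_mul_fold_max [DecidableEq T] {μ π : T → ℝ} (hμ0 : ∀ t, 0 ≤ μ t)
    (hμ1 : ∑ t, μ t = 1) (hπ0 : ∀ t, 0 ≤ π t) (hB : ∀ S, BorderIneq m μ π S) (β : T → ℝ) :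
    (m : ℝ) * ∑ A, β A * μ A * π A
      ≤ ∑ P : Fin m → T, (∏ j, μ (P j)) * univ.fold max 0 (fun i => β (P i)) := by
  induction hn : #(univ.filter fun A => 0 < β A) using Nat.strong_induction_on generalizing β
    with | _ n ih
  set V := univ.filter fun A => 0 < β A
  have hRHS : 0 ≤ ∑ P : Fin m → T, (∏ j, μ (P j)) * univ.fold max 0 (fun i => β (P i)) :=
    sum_nonneg fun P _ => mul_nonneg (prod_nonneg fun j _ => hμ0 _)
      ((le_fold_max _).2 (Or.inl le_rfl))
  obtain hV | hV := V.eq_empty_or_nonempty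
  · refine le_trans (mul_nonpos_of_nonneg_of_nonpos (Nat.cast_nonneg m)
      (sum_nonpos fun A _ => ?_)) hRHS
    have hA : β A ≤ 0 := not_lt.1 fun h => (eq_empty_iff_forall_notMem.1 hV) A (by simp [V, h])
    exact mul_nonpos_of_nonpos_of_nonneg (mul_nonpos_of_nonpos_of_nonneg hA (hμ0 A)) (hπ0 A)
  -- peel off the lowest positive layer `b • 1_V` of `β`
  obtain ⟨A₀, hA₀V, hA₀⟩ := exists_min_image V β hV
  set b := β A₀
  have hb : 0 < b := (mem_filter.1 hA₀V).2
  have hmin : ∀ A, 0 < β A → b ≤ β A := fun A h => hA₀ A (by simp [V, h])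
  set β' := fun A => β A - if 0 < β A then b else 0
  have hcard : #(univ.filter fun A => 0 < β' A) < n := by
    refine hn ▸ (card_le_card fun A hA => ?_).trans_lt (card_erase_lt_of_mem hA₀V)
    have hA := (mem_filter.1 hA).2
    by_cases h : 0 < β A
    · simp only [β', h, if_true] at hA
      exact mem_erase.2 ⟨fun e => (sub_pos.1 hA).ne' (congrArg β e), by simp [V, h]⟩
    · simp [β', h] at hA
  have IH := ih _ hcard β' rfl
  have hL : ∑ A, β A * μ A * π A = ∑ A, β' A * μ A * π A + b * ∑ A ∈ V, π A * μ A := by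
    simp only [V, sum_filter, mul_sum, ← sum_add_distrib]
    refine sum_congr rfl fun A _ => ?_
    by_cases h : 0 < β A <;> simp [β', h]; ring
  have hR : ∑ P : Fin m → T, (∏ j, μ (P j)) * univ.fold max 0 (fun i => β (P i))
      = ∑ P : Fin m → T, (∏ j, μ (P j)) * univ.fold max 0 (fun i => β' (P i))
        + b * (1 - (1 - ∑ t ∈ V, μ t) ^ m) := by
    rw [← sum_prod_ite_exists_mem hμ1 V, mul_sum, ← sum_add_distrib]
    refine sum_congr rfl fun P _ => ?_
    rw [fold_max_eq_fold_max_sub_add (fun i => β (P i)) hb fun i => hmin (P i)]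
    simp only [V, mem_filter, mem_univ, true_and]
    split_ifs <;> ring
  have hBV := mul_le_mul_of_nonneg_left (hB V) hb.le
  rw [hL, hR]
  linarith

lemma mul_sum_le_sum_fold_max [DecidableEq T] {μ π : T → ℝ} (hμ0 : ∀ t, 0 ≤ μ t)
    (hμ1 : ∑ t, μ t = 1) (hπ0 : ∀ t, 0 ≤ π t) (hπ1 : ∀ t, π t ≤ 1)
    (hB : ∀ S, BorderIneq m μ π S) (γ : T → ℝ) :
    (m : ℝ) * ∑ A, γ A * π A
      ≤ ∑ P : Fin m → T, univ.fold max 0 (fun i => (∏ j ∈ univ.erase i, μ (P j)) * γ (P i)) := by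
  set β := fun A => γ A / μ A
  -- `β` vanishes on the types of mass zero (`γ A / 0 = 0`); these are charged bidder by bidder
  have hsplit : ∑ A, γ A * π A
      = ∑ A, β A * μ A * π A + ∑ A, if μ A = 0 then γ A * π A else 0 := by
    rw [← sum_add_distrib]
    refine sum_congr rfl fun A _ => ?_
    by_cases h : μ A = 0 <;> simp [β, h]
  have hzero : ∀ i : Fin m, ∑ A, (if μ A = 0 then γ A * π A else 0)
      ≤ ∑ P : Fin m → T,
          (if μ (P i) = 0 then max 0 (γ (P i)) else 0) * ∏ j ∈ univ.erase i, μ (P j) := by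
    intro i
    rw [sum_mul_prod_erase hμ1 (fun t => if μ t = 0 then max 0 (γ t) else 0)]
    refine sum_le_sum fun A _ => ?_
    split_ifs
    · exact (mul_le_mul_of_nonneg_right (le_max_right _ _) (hπ0 A)).trans
        (mul_le_of_le_one_right (le_max_left _ _) (hπ1 A))
    · exact le_rfl
  calc (m : ℝ) * ∑ A, γ A * π A
      = m * ∑ A, β A * μ A * π A + ∑ i : Fin m, ∑ A, (if μ A = 0 then γ A * π A else 0) := by
        rw [hsplit, mul_add, sum_const, card_univ, Fintype.card_fin, nsmul_eq_mul]
    _ ≤ ∑ P : Fin m → T, (∏ j, μ (P j)) * univ.fold max 0 (fun i => β (P i))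
        + ∑ P : Fin m → T, ∑ i,
            (if μ (P i) = 0 then max 0 (γ (P i)) else 0) * ∏ j ∈ univ.erase i, μ (P j) := by
        rw [sum_comm (s := (univ : Finset (Fin m → T)))]
        exact add_le_add (mul_sum_le_sum_prod_mul_fold_max hμ0 hμ1 hπ0 hB β)
          (sum_le_sum fun i _ => hzero i)
    _ ≤ _ := by
        rw [← sum_add_distrib]
        exact sum_le_sum fun P _ =>
          prod_mul_fold_max_div_add_sum_le (fun i => hμ0 (P i)) (fun i => γ (P i))

def interimAllocₗ [DecidableEq T] (μ : T → ℝ) (i : Fin m) :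
    ((Fin m → T) → Fin m → ℝ) →ₗ[ℝ] T → ℝ where
  toFun φ := interimAlloc μ φ i
  map_add' φ ψ := by
    ext A
    simp only [interimAlloc, Pi.add_apply, mul_add, ← sum_add_distrib]
    exact sum_congr rfl fun P _ => by split_ifs <;> simp
  map_smul' c φ := by
    ext A
    simp only [interimAlloc, Pi.smul_apply, smul_eq_mul, RingHom.id_apply, mul_sum]
    exact sum_congr rfl fun P _ => by split_ifs <;> ring

def bidderSum [DecidableEq T] (μ : T → ℝ) : ((Fin m → T) → Fin m → ℝ) →ₗ[ℝ] T → ℝ :=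
  ∑ i, interimAllocₗ μ i

lemma bidderSum_apply [DecidableEq T] (μ : T → ℝ) (φ : (Fin m → T) → Fin m → ℝ) (A : T) :
    bidderSum μ φ A = ∑ i, interimAlloc μ φ i A := by
  simp [bidderSum, interimAllocₗ]

lemma exists_mem_allocations_sum_fold_max_le [DecidableEq T] (hm : 0 < m) (μ γ : T → ℝ) :
    ∃ φ ∈ allocations T m,
      ∑ P : Fin m → T, univ.fold max 0 (fun i => (∏ j ∈ univ.erase i, μ (P j)) * γ (P i))
        ≤ ∑ A, γ A * bidderSum μ φ A := by
  have : Nonempty (Fin m) := ⟨⟨0, hm⟩⟩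
  choose y hy hle using fun P : Fin m → T =>
    exists_fold_max_le_sum_mul fun i => (∏ j ∈ univ.erase i, μ (P j)) * γ (P i)
  refine ⟨y, ⟨fun P => (hy P).1, fun P => (hy P).2⟩, (sum_le_sum fun P _ => hle P).trans_eq ?_⟩
  simp only [bidderSum_apply, mul_sum]
  rw [sum_comm]
  conv_rhs => rw [sum_comm]
  exact sum_congr rfl fun i _ => (sum_mul_interimAlloc μ γ y i).symm

lemma interimAlloc_comp_perm [DecidableEq T] (μ : T → ℝ) (φ : (Fin m → T) → Fin m → ℝ)
    (e : Equiv.Perm (Fin m)) (i : Fin m) (A : T) :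
    interimAlloc μ (fun P i => φ (P ∘ e) (e.symm i)) i A = interimAlloc μ φ (e.symm i) A := by
  refine Fintype.sum_equiv (Equiv.arrowCongr e.symm (Equiv.refl T)) _ _ fun P => ?_
  have hprod : ∏ j ∈ univ.erase (e.symm i), μ (P (e j)) = ∏ j ∈ univ.erase i, μ (P j) :=
    prod_equiv e (fun j => by simp [Equiv.eq_symm_apply]) fun j _ => rfl
  have happ : Equiv.arrowCongr e.symm (Equiv.refl T) P = P ∘ e := rfl
  simp [happ, hprod]

lemma exists_mem_allocations_bidderSum_eq [DecidableEq T] (hm : 0 < m) {μ π : T → ℝ}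
    (hμ0 : ∀ t, 0 ≤ μ t) (hμ1 : ∑ t, μ t = 1) (hπ0 : ∀ t, 0 ≤ π t) (hπ1 : ∀ t, π t ≤ 1)
    (hB : ∀ S, BorderIneq m μ π S) :
    ∃ φ ∈ allocations T m, bidderSum μ φ = fun A => (m : ℝ) * π A := by
  by_contra h
  obtain ⟨f, u, hlt, hgt⟩ := geometric_hahn_banach_closed_point
    (convex_allocations.linear_image (bidderSum μ))
    (isCompact_allocations.image (bidderSum μ).continuous_of_finiteDimensional).isClosed
    fun ⟨φ, hφ, e⟩ => h ⟨φ, hφ, e⟩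
  set γ : T → ℝ := fun A => f fun j => if A = j then 1 else 0
  have hf : ∀ ψ : T → ℝ, f ψ = ∑ A, γ A * ψ A := fun ψ => by
    rw [← ContinuousLinearMap.coe_coe, LinearMap.pi_apply_eq_sum_univ]
    simp [γ, mul_comm]
  obtain ⟨φ, hφ, hle⟩ := exists_mem_allocations_sum_fold_max_le hm μ γ
  have hφu := hlt _ ⟨φ, hφ, rfl⟩
  have hdual := mul_sum_le_sum_fold_max hμ0 hμ1 hπ0 hπ1 hB γ
  rw [hf] at hφu hgt
  simp only [mul_left_comm _ (m : ℝ), ← mul_sum] at hgt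
  linarith

lemma exists_interimAlloc_eq_of_bidderSum_eq [DecidableEq T] (hm : 0 < m) {μ π : T → ℝ}
    {φ : (Fin m → T) → Fin m → ℝ} (hφ : φ ∈ allocations T m)
    (h : bidderSum μ φ = fun A => (m : ℝ) * π A) :
    ∃ ψ ∈ allocations T m, ∀ i A, interimAlloc μ ψ i A = π A := by
  have : NeZero m := ⟨hm.ne'⟩
  have hm' : (m : ℝ) ≠ 0 := by positivity
  let shift : Fin m → (Fin m → T) → Fin m → ℝ :=
    fun c P i => φ (P ∘ Equiv.addRight c) ((Equiv.addRight c).symm i)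
  refine ⟨(m : ℝ)⁻¹ • ∑ c, shift c, ⟨fun P i => ?_, fun P => ?_⟩, fun i A => ?_⟩
  · simp only [Pi.smul_apply, Finset.sum_apply, smul_eq_mul]
    exact mul_nonneg (by positivity) (sum_nonneg fun c _ => hφ.1 _ _)
  · simp only [Pi.smul_apply, Finset.sum_apply, smul_eq_mul, ← mul_sum]
    rw [sum_comm, inv_mul_le_iff₀ (by positivity)]
    calc ∑ c, ∑ i, shift c P i ≤ ∑ _c : Fin m, (1 : ℝ) :=
          sum_le_sum fun c _ => (Equiv.sum_comp _ _).trans_le (hφ.2 _)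
      _ = m * 1 := by simp
  · have hA := congrFun h A
    rw [bidderSum_apply] at hA
    change interimAllocₗ μ i ((m : ℝ)⁻¹ • ∑ c, shift c) A = π A
    simp only [map_smul, map_sum, Pi.smul_apply, Finset.sum_apply, smul_eq_mul]
    change (m : ℝ)⁻¹ * ∑ c, interimAlloc μ (shift c) i A = π A
    simp only [shift, interimAlloc_comp_perm]
    rw [← Equiv.sum_comp (Equiv.subLeft i) (fun k => interimAlloc μ φ k A)] at hA
    have hshift : ∀ c : Fin m, (Equiv.addRight c).symm i = i - c := fun c =>
      (Equiv.symm_apply_eq _).2 (sub_add_cancel i c).symm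
    simp only [hshift]
    simp only [Equiv.subLeft_apply] at hA
    rw [hA, inv_mul_cancel_left₀ hm']

end Border

/-- Border's theorem, threshold form: for `m` i.i.d. bidders on finite `T`, a
bidder-symmetric reduced form `π` is feasible if and only if Border's inequality holds
for every threshold set `S_x = {A ∈ T : π(A) > x}`; i.e. it suffices to check Border's
condition only on the (at most `|T|`) sets of this form. -/
theorem stmt_2 {T : Type*} [Fintype T] [DecidableEq T]
    (m : ℕ) (hm : 0 < m)
    (μ : T → ℝ) (hμ0 : ∀ t, 0 ≤ μ t) (hμ1 : ∑ t, μ t = 1)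
    (π : T → ℝ) (hπ0 : ∀ t, 0 ≤ π t) (hπ1 : ∀ t, π t ≤ 1) :
    (∃ φ : (Fin m → T) → Fin m → ℝ,
        (∀ P i, 0 ≤ φ P i) ∧ (∀ P, ∑ i, φ P i ≤ 1) ∧
        (∀ (i : Fin m) (A : T),
          (∑ P : Fin m → T,
            if P i = A then (∏ j ∈ Finset.univ.erase i, μ (P j)) * φ P i else 0) = π A)) ↔
    (∀ x : ℝ,
      (m : ℝ) * ∑ t ∈ Finset.univ.filter (fun t => x < π t), π t * μ t
        ≤ 1 - (1 - ∑ t ∈ Finset.univ.filter (fun t => x < π t), μ t) ^ m) := by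
  constructor
  · rintro ⟨φ, h0, h1, hπ⟩ x
    exact border_of_feasible hμ0 hμ1 ⟨h0, h1⟩ hπ _
  · intro hthreshold
    have hB := border_of_border_threshold hm hμ0 hμ1 hthreshold
    obtain ⟨φ₀, hφ₀, hsum⟩ := exists_mem_allocations_bidderSum_eq hm hμ0 hμ1 hπ0 hπ1 hB
    obtain ⟨φ, hφ, hπ⟩ := exists_interimAlloc_eq_of_bidderSum_eq hm hφ₀ hsum
    exact ⟨φ, hφ.1, hφ.2, hπ⟩
end

section
/- For independent (not necessarily identically distributed) bidders with finite type spaces T_1,…,T_m and a single item, a reduced form (π_i)_{i} is feasible if and only if for all choices of subsets S_1 ⊆ T_1, …, S_m ⊆ T_m: Σ_i Σ_{A∈S_i} π_i(A)·Pr[t_i = A] ≤ 1 − Π_i (1 − Pr[t_i ∈ S_i]). -/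
/-!
Necessity: the expected amount of the item going to bidders whose types lie in the `S i` is at
most the probability that some type lies in its `S i`.

Sufficiency: reduced forms of allocation rules form a compact convex set, so a reduced form
outside it is strictly separated by weights `w` on types. For fixed weights, giving the item at
each profile to a bidder of largest positive weighted coefficient is optimal. On types of
positive probability, `w⁺` has a density `y` with respect to `μ`; writing `y` as a positive
combination of indicators of nested sets turns Border's inequalities into the bound
`∑ y · π · μ ≤ E[max_i y_i(t_i)]`. A type of probability zero is served on the profiles where it
is the only null type; at each profile at most one null type contributes.
-/

open Finset
open scoped NNReal

namespace Finset

variable {α M : Type*} [AddCommMonoid M] [LinearOrder M] [CanonicallyOrderedAdd M] [Sub M]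
  [OrderedSub M] [OrderBot M]

theorem sup_tsub (s : Finset α) (y : α → M) (c : M) :
    s.sup y - c = s.sup fun x => y x - c :=
  apply_sup_eq_sup_comp (· - c) (fun _ _ => Monotone.map_max fun _ _ h => tsub_le_tsub_right h c)
    (by simp)

theorem sup_eq_ite_add_sup_tsub {y : α → M} {c : M}
    (hc : ∀ x, y x ≠ 0 → c ≤ y x) (s : Finset α) :
    s.sup y = (if ∃ x ∈ s, y x ≠ 0 then c else 0) + s.sup fun x => y x - c := by
  rw [← sup_tsub]
  split_ifs with hs
  · obtain ⟨x, hx, hyx⟩ := hs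
    exact (add_tsub_cancel_of_le ((hc x hyx).trans (le_sup hx))).symm
  · push Not at hs
    rw [le_antisymm (Finset.sup_le fun x hx => (hs x hx).le) zero_le, zero_tsub, add_zero]

end Finset

namespace NNReal

theorem prod_mul_sup_div_add_sum_le {ι : Type*} [Fintype ι] [DecidableEq ι]
    (a b : ι → ℝ≥0) :
    (∏ i, a i) * univ.sup (fun i => b i / a i)
      + ∑ i, (∏ j ∈ univ.erase i, a j) * (if a i = 0 then b i else 0)
      ≤ univ.sup fun i => b i * ∏ j ∈ univ.erase i, a j := by
  by_cases h : ∃ i₀, a i₀ = 0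
  · obtain ⟨i₀, hi₀⟩ := h
    have hothers (i : ι) (hi : i ≠ i₀) : ∏ j ∈ univ.erase i, a j = 0 :=
      prod_eq_zero (mem_erase.2 ⟨hi.symm, mem_univ _⟩) hi₀
    rw [prod_eq_zero (mem_univ i₀) hi₀, zero_mul, zero_add,
      sum_eq_single_of_mem i₀ (mem_univ i₀) fun i _ hi => by rw [hothers i hi, zero_mul],
      if_pos hi₀, mul_comm]
    exact le_sup (f := fun i => b i * ∏ j ∈ univ.erase i, a j) (mem_univ i₀)
  · push Not at h
    simp only [h, if_false, mul_zero, sum_const_zero, add_zero, mul_finset_sup]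
    refine (sup_congr rfl fun i _ => ?_).le
    rw [← mul_prod_erase _ _ (mem_univ i)]
    field_simp [h i]

end NNReal

theorem prod_mul_sup_div_add_sum_le_sup_toNNReal {ι : Type*} [Fintype ι] [DecidableEq ι]
    (a : ι → ℝ≥0) (w : ι → ℝ) :
    (∏ i, (a i : ℝ)) * ((univ.sup fun i => (w i).toNNReal / a i : ℝ≥0) : ℝ)
      + ∑ i, (∏ j ∈ univ.erase i, (a j : ℝ)) * (if a i = 0 then ((w i).toNNReal : ℝ) else 0)
      ≤ ((univ.sup fun i => (w i * ∏ j ∈ univ.erase i, (a j : ℝ)).toNNReal : ℝ≥0) : ℝ) := by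
  have hmul (i : ι) : (w i * ∏ j ∈ univ.erase i, (a j : ℝ)).toNNReal
      = (w i).toNNReal * ∏ j ∈ univ.erase i, a j := by
    rw [mul_comm, Real.toNNReal_mul (by positivity), mul_comm, ← NNReal.coe_prod,
      Real.toNNReal_coe]
  have key := NNReal.coe_le_coe.2 (NNReal.prod_mul_sup_div_add_sum_le a fun i => (w i).toNNReal)
  push_cast [apply_ite, mul_ite] at key
  simpa [hmul, mul_ite] using key

section LayerCake

variable {X Ω : Type*} [Fintype X] [DecidableEq X] [Fintype Ω]

theorem sum_mul_le_sum_mul_sup_of_forall_finset (a : X → ℝ) (p : Ω → ℝ) (H : Ω → Finset X)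
    (hS : ∀ S : Finset X, ∑ x ∈ S, a x ≤ ∑ ω with ∃ x ∈ H ω, x ∈ S, p ω)
    (y : X → ℝ≥0) : ∑ x, y x * a x ≤ ∑ ω, p ω * ((H ω).sup y : ℝ≥0) := by
  induction h : #{x | y x ≠ 0} using Nat.strong_induction_on generalizing y with
  | _ n ih =>
  set S : Finset X := {x | y x ≠ 0}
  obtain hS0 | hSne := S.eq_empty_or_nonempty
  · have hy : y = 0 := by ext x; simpa [S] using (Finset.eq_empty_iff_forall_notMem.1 hS0 x)
    subst hy; simp [Finset.sup_eq_zero.2]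
  -- peel off `c` times the indicator of the support of `y`, `c` the least positive value of `y`
  set c := S.inf' hSne y
  have hc : ∀ x, y x ≠ 0 → c ≤ y x := fun x hx => inf'_le _ (by simpa [S] using hx)
  set z : X → ℝ≥0 := fun x => y x - c
  have hz : #{x | z x ≠ 0} < n := by
    obtain ⟨x₀, hx₀, hx₀c⟩ := exists_mem_eq_inf' hSne y
    rw [← h]
    refine card_lt_card ⟨fun x hx => ?_, fun hsub => ?_⟩
    · simp only [mem_filter, mem_univ, true_and, z, S] at hx ⊢
      rintro h0; simp [h0] at hx
    · have := hsub hx₀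
      simp [z, ← hx₀c, c] at this
  have hsup (s : Finset X) :
      ((s.sup y : ℝ≥0) : ℝ) = (if ∃ x ∈ s, x ∈ S then (c : ℝ) else 0) + s.sup z := by
    rw [sup_eq_ite_add_sup_tsub hc s]
    simp only [S, mem_filter, mem_univ, true_and]
    split_ifs <;> simp [z]
  have hpoint (x : X) : (y x : ℝ) = (if x ∈ S then (c : ℝ) else 0) + z x := by
    simpa using hsup {x}
  calc ∑ x, y x * a x = c * ∑ x ∈ S, a x + ∑ x, z x * a x := by
        simp only [hpoint, add_mul, ite_mul, zero_mul, sum_add_distrib, ← sum_filter, mul_sum]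
        simp [S]
    _ ≤ c * ∑ ω with ∃ x ∈ H ω, x ∈ S, p ω + ∑ ω, p ω * ((H ω).sup z : ℝ≥0) :=
        add_le_add (mul_le_mul_of_nonneg_left (hS S) c.2) (ih _ hz z rfl)
    _ = ∑ ω, p ω * ((H ω).sup y : ℝ≥0) := by
        simp only [hsup, mul_add, mul_ite, mul_zero, sum_add_distrib, ← sum_filter, mul_sum]
        simp [mul_comm]

end LayerCake

theorem exists_sum_mul_lt_of_notMem {X : Type*} [Fintype X] {C : Set (X → ℝ)} (hC : Convex ℝ C)
    (hCc : IsClosed C) {x : X → ℝ} (hx : x ∉ C) :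
    ∃ w : X → ℝ, ∀ c ∈ C, ∑ e, c e * w e < ∑ e, x e * w e := by
  classical
  obtain ⟨f, u, hf, hu⟩ := geometric_hahn_banach_closed_point hC hCc hx
  have hrepr (v : X → ℝ) : f v = ∑ e, v e * f fun e' => if e = e' then 1 else 0 := by
    simpa using LinearMap.pi_apply_eq_sum_univ (f : (X → ℝ) →ₗ[ℝ] ℝ) v
  exact ⟨_, fun c hc => hrepr c ▸ hrepr x ▸ (hf c hc).trans hu⟩

theorem exists_sup_toNNReal_le_sum_mul {ι : Type*} [Fintype ι] [DecidableEq ι] (c : ι → ℝ) :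
    ∃ g : ι → ℝ, (∀ i, 0 ≤ g i) ∧ ∑ i, g i ≤ 1 ∧
      ((univ.sup fun i => (c i).toNNReal : ℝ≥0) : ℝ) ≤ ∑ i, c i * g i := by
  obtain h | hne := (univ : Finset ι).eq_empty_or_nonempty
  · exact ⟨0, fun _ => le_rfl, by simp, by simp [h]⟩
  obtain ⟨i₀, -, hi₀⟩ := exists_mem_eq_sup univ hne fun i => (c i).toNNReal
  rw [hi₀, Real.coe_toNNReal']
  rcases le_total (c i₀) 0 with hc | hc
  · exact ⟨0, fun _ => le_rfl, by simp, by simp [hc]⟩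
  · refine ⟨Pi.single i₀ 1, fun i => ?_, by simp, by simp [Pi.single_apply, hc]⟩
    rw [Pi.single_apply]; split_ifs <;> norm_num

section Allocation

variable {ι : Type*} [Fintype ι] {T : ι → Type*}

def IsAllocation (φ : (∀ i, T i) → ι → ℝ) : Prop :=
  (∀ P i, 0 ≤ φ P i) ∧ ∀ P, ∑ i, φ P i ≤ 1

theorem convex_setOf_isAllocation : Convex ℝ {φ : (∀ i, T i) → ι → ℝ | IsAllocation φ} := by
  rintro φ ⟨hφ0, hφ1⟩ ψ ⟨hψ0, hψ1⟩ a b ha hb hab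
  refine ⟨fun P i => add_nonneg (mul_nonneg ha (hφ0 P i)) (mul_nonneg hb (hψ0 P i)),
    fun P => ?_⟩
  simp only [Pi.add_apply, Pi.smul_apply, smul_eq_mul, sum_add_distrib, ← mul_sum]
  nlinarith [hφ1 P, hψ1 P]

theorem isCompact_setOf_isAllocation : IsCompact {φ : (∀ i, T i) → ι → ℝ | IsAllocation φ} := by
  have hclosed : IsClosed {φ : (∀ i, T i) → ι → ℝ | IsAllocation φ} := by
    simp only [IsAllocation, Set.ofPred_and, Set.ofPred_forall]
    exact (isClosed_iInter fun P => isClosed_iInter fun i =>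
        isClosed_le continuous_const (by fun_prop)).inter
      (isClosed_iInter fun P => isClosed_le (by fun_prop) continuous_const)
  have hbox : IsCompact
      (Set.univ.pi fun _ : ∀ i, T i => Set.univ.pi fun _ : ι => Set.Icc (0 : ℝ) 1) :=
    isCompact_univ_pi fun _ => isCompact_univ_pi fun _ => isCompact_Icc
  refine hbox.of_isClosed_subset hclosed fun φ hφ P _ i _ => ⟨hφ.1 P i, ?_⟩
  exact (single_le_sum (fun j _ => hφ.1 P j) (mem_univ i)).trans (hφ.2 P)

end Allocation

section Auction

variable {ι : Type*} [Fintype ι] [DecidableEq ι] {T : ι → Type*} [∀ i, Fintype (T i)]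
  [∀ i, DecidableEq (T i)]

/-- The expectation of `g` over the other bidders' types when bidder `i` has type `A`; the reduced
form of an allocation rule `φ` is `π i A = interim μ i A (φ · i)`. -/
def interim (μ : ∀ i, T i → ℝ) (i : ι) (A : T i) (g : (∀ j, T j) → ℝ) : ℝ :=
  ∑ P : ∀ j, T j, if P i = A then (∏ j ∈ univ.erase i, μ j (P j)) * g P else 0

def BorderCondition (μ π : ∀ i, T i → ℝ) : Prop :=
  ∀ S : ∀ i, Finset (T i), ∑ i, ∑ A ∈ S i, π i A * μ i A ≤ 1 - ∏ i, (1 - ∑ A ∈ S i, μ i A)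

theorem sum_mul_interim (μ : ∀ i, T i → ℝ) (i : ι) (f : T i → ℝ) (g : (∀ j, T j) → ℝ) :
    ∑ A, f A * interim μ i A g = ∑ P, (∏ j ∈ univ.erase i, μ j (P j)) * (f (P i) * g P) := by
  simp only [interim, mul_sum, mul_ite, mul_zero]
  rw [sum_comm]
  refine sum_congr rfl fun P _ => ?_
  rw [sum_ite_eq, if_pos (mem_univ _)]
  ring

theorem interim_one (μ : ∀ i, T i → ℝ) (hμ1 : ∀ i, ∑ t, μ i t = 1) (i : ι) (A : T i) :
    interim μ i A 1 = 1 := by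
  set ν := Function.update μ i (Pi.single A 1)
  have hν (P : ∀ j, T j) :
      (if P i = A then (∏ j ∈ univ.erase i, μ j (P j)) * 1 else 0) = ∏ j, ν j (P j) := by
    rw [← mul_prod_erase _ _ (mem_univ i)]
    simp only [ν, Function.update_self, Pi.single_apply, mul_one, ite_mul, one_mul, zero_mul]
    congr 1
    exact prod_congr rfl fun j hj => by rw [Function.update_of_ne (ne_of_mem_erase hj)]
  have hν1 (j : ι) : ∑ t, ν j t = 1 := by
    by_cases hj : j = i
    · subst hj; simp [ν]
    · simp [ν, Function.update_of_ne hj, hμ1]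
  simp only [interim, Pi.one_apply, hν, ← Fintype.prod_sum, hν1, prod_const_one]

theorem sum_prod_filter_exists_mem (μ : ∀ i, T i → ℝ) (hμ1 : ∀ i, ∑ t, μ i t = 1)
    (S : ∀ i, Finset (T i)) :
    ∑ P : (∀ i, T i) with ∃ i, P i ∈ S i, ∏ j, μ j (P j) = 1 - ∏ i, (1 - ∑ A ∈ S i, μ i A) := by
  have hmiss :
      univ.filter (fun P : ∀ i, T i => ∀ i, P i ∉ S i) = Fintype.piFinset fun i => (S i)ᶜ := by
    ext P; simp
  have htotal : ∑ P : ∀ i, T i, ∏ j, μ j (P j) = 1 := by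
    simp [← Fintype.prod_sum, hμ1]
  have hmiss_prob :
      ∏ i, (1 - ∑ A ∈ S i, μ i A) = ∑ P : (∀ i, T i) with ¬∃ i, P i ∈ S i, ∏ j, μ j (P j) := by
    simp only [not_exists, hmiss, ← prod_univ_sum]
    refine prod_congr rfl fun i _ => ?_
    rw [← hμ1 i, ← sum_compl_add_sum (S i), add_sub_cancel_right]
  rw [hmiss_prob, ← htotal, ← sum_filter_add_sum_filter_not univ (fun P => ∃ i, P i ∈ S i),
    add_sub_cancel_right]

theorem borderCondition_of_isAllocation {μ π : ∀ i, T i → ℝ} (hμ0 : ∀ i t, 0 ≤ μ i t)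
    (hμ1 : ∀ i, ∑ t, μ i t = 1) {φ : (∀ i, T i) → ι → ℝ}
    (hφ : IsAllocation φ) (hφπ : ∀ i A, interim μ i A (φ · i) = π i A) :
    BorderCondition μ π := by
  intro S
  have hprofile (P : ∀ i, T i) :
      ∑ i, (if P i ∈ S i then (∏ j, μ j (P j)) * φ P i else 0)
        ≤ if ∃ i, P i ∈ S i then ∏ j, μ j (P j) else 0 := by
    have hp : 0 ≤ ∏ j, μ j (P j) := prod_nonneg fun j _ => hμ0 j (P j)
    split_ifs with h
    · calc ∑ i, (if P i ∈ S i then (∏ j, μ j (P j)) * φ P i else 0)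
          ≤ ∑ i, (∏ j, μ j (P j)) * φ P i :=
            sum_le_sum fun i _ => by split_ifs <;> simp [mul_nonneg hp (hφ.1 P i)]
        _ ≤ ∏ j, μ j (P j) := by
            rw [← mul_sum]; exact mul_le_of_le_one_right hp (hφ.2 P)
    · push Not at h; simp [h]
  calc ∑ i, ∑ A ∈ S i, π i A * μ i A
      = ∑ i, ∑ A, (if A ∈ S i then μ i A else 0) * interim μ i A (φ · i) := by
        refine sum_congr rfl fun i _ => ?_
        simp only [hφπ, ite_mul, zero_mul, sum_ite_mem, univ_inter]
        exact sum_congr rfl fun A _ => mul_comm _ _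
    _ = ∑ P, ∑ i, (if P i ∈ S i then (∏ j, μ j (P j)) * φ P i else 0) := by
        simp only [sum_mul_interim]
        rw [sum_comm]
        refine sum_congr rfl fun P _ => sum_congr rfl fun i _ => ?_
        rw [← mul_prod_erase _ (fun j => μ j (P j)) (mem_univ i)]
        split_ifs <;> ring
    _ ≤ ∑ P, if ∃ i, P i ∈ S i then ∏ j, μ j (P j) else 0 := sum_le_sum fun P _ => hprofile P
    _ = 1 - ∏ i, (1 - ∑ A ∈ S i, μ i A) := by rw [← sum_filter, sum_prod_filter_exists_mem μ hμ1]

theorem sum_mul_le_sum_prod_mul_sup_of_borderCondition {μ π : ∀ i, T i → ℝ}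
    (hμ1 : ∀ i, ∑ t, μ i t = 1) (hB : BorderCondition μ π) (y : ∀ i, T i → ℝ≥0) :
    ∑ i, ∑ A, y i A * (π i A * μ i A)
      ≤ ∑ P : ∀ i, T i, (∏ j, μ j (P j)) * ((univ.sup fun i => y i (P i) : ℝ≥0) : ℝ) := by
  have key := sum_mul_le_sum_mul_sup_of_forall_finset (X := Σ i, T i)
    (fun e => π e.1 e.2 * μ e.1 e.2) (fun P : ∀ i, T i => ∏ j, μ j (P j))
    (fun P : ∀ i, T i => univ.image fun i => ⟨i, P i⟩) ?_ (fun e => y e.1 e.2)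
  · simpa [Fintype.sum_sigma, sup_image, Function.comp_def] using key
  · intro S
    have hS : S = univ.sigma fun i => univ.filter fun A => ⟨i, A⟩ ∈ S := by
      ext ⟨i, A⟩; simp
    convert hB fun i => univ.filter fun A => ⟨i, A⟩ ∈ S using 1
    · rw [hS, sum_sigma]; simp
    · rw [← sum_prod_filter_exists_mem μ hμ1]; simp

theorem sum_mul_le_sum_sup_of_borderCondition {μ π : ∀ i, T i → ℝ} (hμ0 : ∀ i t, 0 ≤ μ i t)
    (hμ1 : ∀ i, ∑ t, μ i t = 1) (hπ0 : ∀ i t, 0 ≤ π i t) (hπ1 : ∀ i t, π i t ≤ 1)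
    (hB : BorderCondition μ π) (w : ∀ i, T i → ℝ) :
    ∑ i, ∑ A, π i A * w i A ≤ ∑ P : ∀ i, T i,
      ((univ.sup fun i => (w i (P i) * ∏ j ∈ univ.erase i, μ j (P j)).toNNReal : ℝ≥0) : ℝ) := by
  lift μ to ∀ i, T i → ℝ≥0 using hμ0
  set W : ∀ i, T i → ℝ≥0 := fun i A => (w i A).toNNReal
  -- density of `w⁺` with respect to `μ`; it is `0` on null types (`x / 0 = 0`), whose share is the
  -- `if` term below
  set y : ∀ i, T i → ℝ≥0 := fun i A => W i A / μ i A
  have hpoint (i : ι) (A : T i) :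
      π i A * w i A ≤ y i A * (π i A * μ i A) + if μ i A = 0 then (W i A : ℝ) else 0 := by
    have hw : π i A * w i A ≤ π i A * W i A :=
      mul_le_mul_of_nonneg_left (Real.le_coe_toNNReal _) (hπ0 i A)
    split_ifs with h
    · simpa [h] using hw.trans (mul_le_of_le_one_left (W i A).2 (hπ1 i A))
    · have : (y i A : ℝ) * μ i A = W i A := by simp [y, h]
      linear_combination hw - π i A * this
  have hnull : ∑ i, ∑ A, (if μ i A = 0 then (W i A : ℝ) else 0)
      = ∑ P : ∀ i, T i, ∑ i,
          (∏ j ∈ univ.erase i, (μ j (P j) : ℝ))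
            * (if μ i (P i) = 0 then (W i (P i) : ℝ) else 0) := by
    rw [sum_comm]
    refine sum_congr rfl fun i _ => ?_
    simpa [interim_one _ hμ1] using sum_mul_interim (fun i t => (μ i t : ℝ)) i
      (fun A => if μ i A = 0 then (W i A : ℝ) else 0) 1
  calc ∑ i, ∑ A, π i A * w i A
      ≤ ∑ i, ∑ A, (y i A * (π i A * μ i A) + if μ i A = 0 then (W i A : ℝ) else 0) :=
        sum_le_sum fun i _ => sum_le_sum fun A _ => hpoint i A
    _ = ∑ i, ∑ A, y i A * (π i A * μ i A)
          + ∑ i, ∑ A, (if μ i A = 0 then (W i A : ℝ) else 0) := by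
        simp only [sum_add_distrib]
    _ ≤ ∑ P : ∀ i, T i, ((∏ j, (μ j (P j) : ℝ)) * ((univ.sup fun i => y i (P i) : ℝ≥0) : ℝ)
          + ∑ i, (∏ j ∈ univ.erase i, (μ j (P j) : ℝ))
              * (if μ i (P i) = 0 then (W i (P i) : ℝ) else 0)) := by
        rw [sum_add_distrib, hnull]
        gcongr
        exact sum_mul_le_sum_prod_mul_sup_of_borderCondition hμ1 hB y
    _ ≤ _ := sum_le_sum fun P _ =>
        prod_mul_sup_div_add_sum_le_sup_toNNReal (fun i => μ i (P i)) (fun i => w i (P i))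

def reducedForm (μ : ∀ i, T i → ℝ) : ((∀ i, T i) → ι → ℝ) →ₗ[ℝ] (Σ i, T i) → ℝ where
  toFun φ e := interim μ e.1 e.2 (φ · e.1)
  map_add' φ ψ := by
    ext e
    simp only [interim, Pi.add_apply, ← sum_add_distrib]
    exact sum_congr rfl fun P _ => by split_ifs <;> ring
  map_smul' r φ := by
    ext e
    simp only [interim, Pi.smul_apply, smul_eq_mul, RingHom.id_apply, mul_sum]
    exact sum_congr rfl fun P _ => by split_ifs <;> ring

theorem reducedForm_apply (μ : ∀ i, T i → ℝ) (φ : (∀ i, T i) → ι → ℝ) (e : Σ i, T i) :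
    reducedForm μ φ e = interim μ e.1 e.2 (φ · e.1) :=
  rfl

theorem sum_reducedForm_mul (μ : ∀ i, T i → ℝ) (φ : (∀ i, T i) → ι → ℝ) (w : (Σ i, T i) → ℝ) :
    ∑ e, reducedForm μ φ e * w e
      = ∑ P : ∀ i, T i, ∑ i, (w ⟨i, P i⟩ * ∏ j ∈ univ.erase i, μ j (P j)) * φ P i := by
  rw [Fintype.sum_sigma, sum_comm]
  refine sum_congr rfl fun i _ => ?_
  simp only [reducedForm_apply, mul_comm (interim _ _ _ _)]
  exact (sum_mul_interim μ i _ _).trans (sum_congr rfl fun P _ => by ring)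

theorem exists_isAllocation_of_borderCondition {μ π : ∀ i, T i → ℝ} (hμ0 : ∀ i t, 0 ≤ μ i t)
    (hμ1 : ∀ i, ∑ t, μ i t = 1) (hπ0 : ∀ i t, 0 ≤ π i t) (hπ1 : ∀ i t, π i t ≤ 1)
    (hB : BorderCondition μ π) :
    ∃ φ, IsAllocation φ ∧ ∀ i A, interim μ i A (φ · i) = π i A := by
  by_contra hno
  have hπK : (fun e : Σ i, T i => π e.1 e.2) ∉ reducedForm μ '' {φ | IsAllocation φ} := by
    rintro ⟨φ, hφ, hφπ⟩
    exact hno ⟨φ, hφ, fun i A => congrFun hφπ ⟨i, A⟩⟩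
  obtain ⟨w, hw⟩ := exists_sum_mul_lt_of_notMem (convex_setOf_isAllocation.linear_image _)
    (isCompact_setOf_isAllocation.image (reducedForm μ).continuous_of_finiteDimensional).isClosed
    hπK
  choose g hg0 hg1 hgw using fun P : ∀ i, T i =>
    exists_sup_toNNReal_le_sum_mul fun i => w ⟨i, P i⟩ * ∏ j ∈ univ.erase i, μ j (P j)
  refine (hw _ ⟨g, ⟨hg0, hg1⟩, rfl⟩).not_ge ?_
  calc ∑ e, π e.1 e.2 * w e = ∑ i, ∑ A, π i A * w ⟨i, A⟩ := Fintype.sum_sigma _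
    _ ≤ _ := sum_mul_le_sum_sup_of_borderCondition hμ0 hμ1 hπ0 hπ1 hB fun i A => w ⟨i, A⟩
    _ ≤ _ := sum_le_sum fun P _ => hgw P
    _ = ∑ e, reducedForm μ g e * w e := (sum_reducedForm_mul μ g w).symm

end Auction

theorem stmt_3_general (m : ℕ) (T : Fin m → Type*)
    [∀ i, Fintype (T i)] [∀ i, DecidableEq (T i)]
    (μ : ∀ i, T i → ℝ) (hμ0 : ∀ i t, 0 ≤ μ i t) (hμ1 : ∀ i, ∑ t, μ i t = 1)
    (π : ∀ i, T i → ℝ) (hπ0 : ∀ i t, 0 ≤ π i t) (hπ1 : ∀ i t, π i t ≤ 1) :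
    (∃ φ : (∀ i, T i) → Fin m → ℝ,
        (∀ P i, 0 ≤ φ P i) ∧ (∀ P, ∑ i, φ P i ≤ 1) ∧
        (∀ (i : Fin m) (A : T i),
          (∑ P : ∀ j, T j,
            if P i = A then (∏ j ∈ Finset.univ.erase i, μ j (P j)) * φ P i else 0)
          = π i A)) ↔
    (∀ S : ∀ i, Finset (T i),
      ∑ i, ∑ A ∈ S i, π i A * μ i A ≤ 1 - ∏ i, (1 - ∑ A ∈ S i, μ i A)) := by
  constructor
  · rintro ⟨φ, hφ0, hφ1, hφπ⟩
    exact borderCondition_of_isAllocation hμ0 hμ1 ⟨hφ0, hφ1⟩ hφπ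
  · intro hB
    obtain ⟨φ, ⟨hφ0, hφ1⟩, hφπ⟩ := exists_isAllocation_of_borderCondition hμ0 hμ1 hπ0 hπ1 hB
    exact ⟨φ, hφ0, hφ1, hφπ⟩

/-- Border's theorem for independent (not necessarily identical) bidders: bidder `i`'s
type is drawn independently from `μ i` on the finite set `T i`; a single item is for
sale. A reduced form `π` is feasible (induced by some ex-post allocation rule that
never over-allocates the item) if and only if for all choices of subsets
`S i ⊆ T i`: `Σ_i Σ_{A∈S_i} π_i(A)·Pr[t_i = A] ≤ 1 − Π_i (1 − Pr[t_i ∈ S_i])`. -/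
theorem stmt_3 (m : ℕ) (hm : 0 < m) (T : Fin m → Type*)
    [∀ i, Fintype (T i)] [∀ i, DecidableEq (T i)]
    (μ : ∀ i, T i → ℝ) (hμ0 : ∀ i t, 0 ≤ μ i t) (hμ1 : ∀ i, ∑ t, μ i t = 1)
    (π : ∀ i, T i → ℝ) (hπ0 : ∀ i t, 0 ≤ π i t) (hπ1 : ∀ i t, π i t ≤ 1) :
    (∃ φ : (∀ i, T i) → Fin m → ℝ,
        (∀ P i, 0 ≤ φ P i) ∧ (∀ P, ∑ i, φ P i ≤ 1) ∧
        (∀ (i : Fin m) (A : T i),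
          (∑ P : ∀ j, T j,
            if P i = A then (∏ j ∈ Finset.univ.erase i, μ j (P j)) * φ P i else 0)
          = π i A)) ↔
    (∀ S : ∀ i, Finset (T i),
      ∑ i, ∑ A ∈ S i, π i A * μ i A ≤ 1 - ∏ i, (1 - ∑ A ∈ S i, μ i A)) :=
  stmt_3_general m T μ hμ0 hμ1 π hπ0 hπ1
end

section
/- There exists an infeasible single-item reduced form for two independent bidders such that every collection of threshold sets of the form S^i_x = {A ∈ T_i : π_i(A) > x} (with the same threshold x for all bidders) satisfies the Border inequality Σ_i Σ_{A∈S^i_x} π_i(A)Pr[t_i=A] ≤ 1 − Π_i(1 − Pr[t_i ∈ S^i_x]). Concretely: bidder 1 has types A, B with Pr[A]=1/8, Pr[B]=7/8, π_1(A)=5/8, π_1(B)=0; bidder 2 has types C, D with Pr[C]=Pr[D]=1/2, π_2(C)=1, π_2(D)=3/4; this reduced form is infeasible (the set {A,C} is constricting) yet all common-threshold sets satisfy the inequality. -/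
/- Two independent bidders, single item. Bidder 1 has types A (`true`) and B (`false`)
with probabilities 1/8, 7/8 and reduced form values 5/8, 0. Bidder 2 has types C
(`true`) and D (`false`) with probabilities 1/2, 1/2 and reduced form values 1, 3/4. -/

noncomputable def mu1 : Bool → ℝ := fun t => if t then 1/8 else 7/8
noncomputable def pi1 : Bool → ℝ := fun t => if t then 5/8 else 0
noncomputable def mu2 : Bool → ℝ := fun t => if t then 1/2 else 1/2
noncomputable def pi2 : Bool → ℝ := fun t => if t then 1 else 3/4

/-! A feasible reduced form satisfies every Border inequality: integrating the pointwise bound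
`1[t₁ ∈ S₁] φ₁ + 1[t₂ ∈ S₂] φ₂ ≤ 1[t₁ ∈ S₁ ∨ t₂ ∈ S₂]` against the product distribution. The
reduced form above violates it on `{A} × {C}` (`37/64 > 36/64`), while for a common threshold `x`
only five pairs of sets occur, and each satisfies it. -/

open Finset

theorem sum_mul_ite_mem_compl {α : Type*} [Fintype α] [DecidableEq α] {μ : α → ℝ}
    (hμ : ∑ t, μ t = 1) (S : Finset α) :
    ∑ t, μ t * (if t ∈ Sᶜ then 1 else 0) = 1 - ∑ t ∈ S, μ t := by
  simp only [mul_ite, mul_one, mul_zero, sum_ite_mem, univ_inter]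
  linarith [sum_compl_add_sum S μ]

section Border

variable {T₁ T₂ : Type*} [Fintype T₁] [Fintype T₂]

/-- `φᵢ t₁ t₂` is the probability that bidder `i` gets the item at the type profile `(t₁, t₂)`. -/
def IsFeasibleReducedForm (μ₁ π₁ : T₁ → ℝ) (μ₂ π₂ : T₂ → ℝ) : Prop :=
  ∃ φ₁ φ₂ : T₁ → T₂ → ℝ,
    (∀ t₁ t₂, 0 ≤ φ₁ t₁ t₂) ∧ (∀ t₁ t₂, 0 ≤ φ₂ t₁ t₂) ∧
    (∀ t₁ t₂, φ₁ t₁ t₂ + φ₂ t₁ t₂ ≤ 1) ∧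
    (∀ t₁, ∑ t₂, μ₂ t₂ * φ₁ t₁ t₂ = π₁ t₁) ∧
    (∀ t₂, ∑ t₁, μ₁ t₁ * φ₂ t₁ t₂ = π₂ t₂)

def BorderInequality (μ₁ π₁ : T₁ → ℝ) (μ₂ π₂ : T₂ → ℝ) (S₁ : Finset T₁) (S₂ : Finset T₂) :
    Prop :=
  ∑ t ∈ S₁, π₁ t * μ₁ t + ∑ t ∈ S₂, π₂ t * μ₂ t ≤
    1 - (1 - ∑ t ∈ S₁, μ₁ t) * (1 - ∑ t ∈ S₂, μ₂ t)

theorem IsFeasibleReducedForm.borderInequality [DecidableEq T₁] [DecidableEq T₂]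
    {μ₁ π₁ : T₁ → ℝ} {μ₂ π₂ : T₂ → ℝ}
    (hμ₁ : ∀ t, 0 ≤ μ₁ t) (hμ₂ : ∀ t, 0 ≤ μ₂ t) (hμ₁_sum : ∑ t, μ₁ t = 1)
    (hμ₂_sum : ∑ t, μ₂ t = 1) (h : IsFeasibleReducedForm μ₁ π₁ μ₂ π₂)
    (S₁ : Finset T₁) (S₂ : Finset T₂) : BorderInequality μ₁ π₁ μ₂ π₂ S₁ S₂ := by
  obtain ⟨φ₁, φ₂, hφ₁, hφ₂, hφ, hπ₁, hπ₂⟩ := h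
  have allocated₁ : ∑ t ∈ S₁, π₁ t * μ₁ t =
      ∑ t₁, ∑ t₂, μ₁ t₁ * μ₂ t₂ * (if t₁ ∈ S₁ then φ₁ t₁ t₂ else 0) := by
    simp_rw [mul_ite, mul_zero, sum_ite_irrel, sum_const_zero, sum_ite_mem, univ_inter, ← hπ₁,
      sum_mul]
    exact sum_congr rfl fun _ _ => sum_congr rfl fun _ _ => by ring
  have allocated₂ : ∑ t ∈ S₂, π₂ t * μ₂ t =
      ∑ t₁, ∑ t₂, μ₁ t₁ * μ₂ t₂ * (if t₂ ∈ S₂ then φ₂ t₁ t₂ else 0) := by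
    rw [sum_comm]
    simp_rw [mul_ite, mul_zero, sum_ite_irrel, sum_const_zero, sum_ite_mem, univ_inter, ← hπ₂,
      sum_mul]
    exact sum_congr rfl fun _ _ => sum_congr rfl fun _ _ => by ring
  have served : 1 - (1 - ∑ t ∈ S₁, μ₁ t) * (1 - ∑ t ∈ S₂, μ₂ t) =
      ∑ t₁, ∑ t₂, μ₁ t₁ * μ₂ t₂ *
        (1 - (if t₁ ∈ S₁ᶜ then 1 else 0) * (if t₂ ∈ S₂ᶜ then 1 else 0)) := by
    calc 1 - (1 - ∑ t ∈ S₁, μ₁ t) * (1 - ∑ t ∈ S₂, μ₂ t)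
        = (∑ t, μ₁ t) * (∑ t, μ₂ t) - (∑ t, μ₁ t * (if t ∈ S₁ᶜ then 1 else 0)) *
            (∑ t, μ₂ t * (if t ∈ S₂ᶜ then 1 else 0)) := by
          rw [sum_mul_ite_mem_compl hμ₁_sum, sum_mul_ite_mem_compl hμ₂_sum, hμ₁_sum, hμ₂_sum]
          ring
      _ = _ := by
          simp_rw [sum_mul_sum, ← sum_sub_distrib]
          exact sum_congr rfl fun _ _ => sum_congr rfl fun _ _ => by ring
  have pointwise : ∀ t₁ t₂, (if t₁ ∈ S₁ then φ₁ t₁ t₂ else 0) + (if t₂ ∈ S₂ then φ₂ t₁ t₂ else 0) ≤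
      1 - (if t₁ ∈ S₁ᶜ then 1 else 0) * (if t₂ ∈ S₂ᶜ then 1 else 0) := by
    intro t₁ t₂
    by_cases h₁ : t₁ ∈ S₁ <;> by_cases h₂ : t₂ ∈ S₂ <;>
      simp only [h₁, h₂, mem_compl, not_true_eq_false, not_false_eq_true, if_true, if_false,
        mul_one, mul_zero, sub_zero, sub_self, add_zero, zero_add] <;>
      linarith [hφ t₁ t₂, hφ₁ t₁ t₂, hφ₂ t₁ t₂]
  rw [BorderInequality, allocated₁, allocated₂, served]
  simp_rw [← sum_add_distrib, ← mul_add]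
  gcongr with t₁ _ t₂ _
  · exact mul_nonneg (hμ₁ t₁) (hμ₂ t₂)
  · exact pointwise t₁ t₂

end Border

theorem not_isFeasibleReducedForm : ¬ IsFeasibleReducedForm mu1 pi1 mu2 pi2 := by
  intro h
  have constricting := h.borderInequality (by norm_num [mu1]) (by norm_num [mu2])
    (by norm_num [mu1]) (by norm_num [mu2]) {true} {true}
  norm_num [BorderInequality, mu1, mu2, pi1, pi2] at constricting

theorem borderInequality_commonThreshold (x : ℝ) :
    BorderInequality mu1 pi1 mu2 pi2 (univ.filter (x < pi1 ·)) (univ.filter (x < pi2 ·)) := by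
  rw [BorderInequality, sum_filter, sum_filter, sum_filter, sum_filter]
  simp only [Fintype.sum_bool, mu1, mu2, pi1, pi2, if_true, Bool.false_eq_true, if_false]
  split_ifs <;> linarith

/-- There exists an infeasible single-item reduced form for two independent bidders such
that every collection of threshold sets `S^i_x = {A ∈ T_i : π_i(A) > x}` (with the same
threshold `x` for all bidders) satisfies the Border inequality.  The concrete reduced
form above is infeasible, yet all common-threshold sets satisfy the inequality. -/
theorem stmt_6 :
    (¬ ∃ φ₁ φ₂ : Bool → Bool → ℝ,
        (∀ t₁ t₂, 0 ≤ φ₁ t₁ t₂) ∧ (∀ t₁ t₂, 0 ≤ φ₂ t₁ t₂) ∧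
        (∀ t₁ t₂, φ₁ t₁ t₂ + φ₂ t₁ t₂ ≤ 1) ∧
        (∀ t₁ : Bool, ∑ t₂ : Bool, mu2 t₂ * φ₁ t₁ t₂ = pi1 t₁) ∧
        (∀ t₂ : Bool, ∑ t₁ : Bool, mu1 t₁ * φ₂ t₁ t₂ = pi2 t₂)) ∧
    (∀ x : ℝ,
      (∑ t ∈ Finset.univ.filter (fun t : Bool => x < pi1 t), pi1 t * mu1 t) +
      (∑ t ∈ Finset.univ.filter (fun t : Bool => x < pi2 t), pi2 t * mu2 t) ≤
        1 - (1 - ∑ t ∈ Finset.univ.filter (fun t : Bool => x < pi1 t), mu1 t) *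
            (1 - ∑ t ∈ Finset.univ.filter (fun t : Bool => x < pi2 t), mu2 t)) :=
  ⟨not_isFeasibleReducedForm, borderInequality_commonThreshold⟩
end

section
/- The multi-item reduced form π (for bidders with demand constraints C_i and arbitrarily correlated types) is feasible if and only if the associated multi-commodity flow problem has a feasible solution satisfying every demand: sources S(j) for each item j, intermediate nodes I(P) for each profile P, sinks T(i,A) for each bidder-type pair; edge S(j)→I(P) of capacity Pr[P], edge I(P)→T(i,P_i) of capacity C_i·Pr[P]; commodity G_{ij}(A) must route Pr[t_i=A]·π_{ij}(A) units from S(j) to T(i,A). -/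
/-!
An ex-post rule `φ` and a flow `g` are the same object up to scaling by `Pr[P]`: the flow of
commodity `G_{ij}(A)` through the node `I(P)` is `φ_{ij}(P)·Pr[P]` when `P_i = A`. The
capacities of the two edges at `I(P)` are then the two ex-post constraints multiplied by
`Pr[P]`, and the demands are the reduced-form equations. Conversely
`φ_{ij}(P) := g_{ij}(P_i, P) / Pr[P]`; on profiles of probability zero the capacities force the
flow to vanish.
-/

open Finset

section ReducedForm

variable {ι κ R : Type*} [Fintype ι] [DecidableEq ι] [Fintype κ]
  {T : ι → Type*} [∀ i, Fintype (T i)] [∀ i, DecidableEq (T i)]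
  [Field R] [LinearOrder R]
  {D : (∀ i, T i) → R} {C : ι → R} {π : ∀ i, T i → κ → R}

def IsExPostRule (D : (∀ i, T i) → R) (C : ι → R) (π : ∀ i, T i → κ → R)
    (φ : (∀ i, T i) → ι → κ → R) : Prop :=
  (∀ P i j, 0 ≤ φ P i j) ∧
  (∀ P i, ∑ j, φ P i j ≤ C i) ∧
  (∀ P j, ∑ i, φ P i j ≤ 1) ∧
  ∀ i A j, (∑ P : ∀ i, T i, if P i = A then φ P i j * D P else 0) =
    π i A j * ∑ P : ∀ i, T i, if P i = A then D P else 0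

def IsFeasibleFlow (D : (∀ i, T i) → R) (C : ι → R) (π : ∀ i, T i → κ → R)
    (g : (i : ι) → κ → T i → (∀ i, T i) → R) : Prop :=
  (∀ i j A P, 0 ≤ g i j A P) ∧
  (∀ i j A P, P i ≠ A → g i j A P = 0) ∧
  (∀ i j A, ∑ P, g i j A P = π i A j * ∑ P : ∀ i, T i, if P i = A then D P else 0) ∧
  (∀ j P, ∑ i, ∑ A, g i j A P ≤ D P) ∧
  (∀ i P, ∑ j, ∑ A, g i j A P ≤ C i * D P)

theorem IsFeasibleFlow.sum_types_eq {g : (i : ι) → κ → T i → (∀ i, T i) → R}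
    (hg : IsFeasibleFlow D C π g) (i : ι) (j : κ) (P : ∀ i, T i) :
    ∑ A, g i j A P = g i j (P i) P :=
  Fintype.sum_eq_single (P i) fun A hA => hg.2.1 i j A P (Ne.symm hA)

def flowOfRule (D : (∀ i, T i) → R) (φ : (∀ i, T i) → ι → κ → R) :
    (i : ι) → κ → T i → (∀ i, T i) → R :=
  fun i j A P => if P i = A then φ P i j * D P else 0

variable [IsStrictOrderedRing R]

theorem IsExPostRule.isFeasibleFlow {φ : (∀ i, T i) → ι → κ → R} (hD : ∀ P, 0 ≤ D P)
    (hφ : IsExPostRule D C π φ) : IsFeasibleFlow D C π (flowOfRule D φ) := by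
  obtain ⟨hφ0, hφC, hφ1, hφπ⟩ := hφ
  refine ⟨fun i j A P => ?_, fun i j A P h => if_neg h, fun i j A => hφπ i A j,
    fun j P => ?_, fun i P => ?_⟩
  · unfold flowOfRule
    split_ifs
    exacts [mul_nonneg (hφ0 P i j) (hD P), le_rfl]
  · simp only [flowOfRule, Fintype.sum_ite_eq, ← sum_mul]
    simpa using mul_le_mul_of_nonneg_right (hφ1 P j) (hD P)
  · simp only [flowOfRule, Fintype.sum_ite_eq, ← sum_mul]
    exact mul_le_mul_of_nonneg_right (hφC P i) (hD P)

theorem IsFeasibleFlow.apply_le {g : (i : ι) → κ → T i → (∀ i, T i) → R}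
    (hg : IsFeasibleFlow D C π g) (i : ι) (j : κ) (A : T i) (P : ∀ i, T i) :
    g i j A P ≤ D P := by
  have hnonneg := hg.1
  calc g i j A P ≤ ∑ A, g i j A P := single_le_sum (fun A _ => hnonneg i j A P) (mem_univ A)
    _ ≤ ∑ i, ∑ A, g i j A P :=
      single_le_sum (f := fun i => ∑ A, g i j A P)
        (fun i _ => sum_nonneg fun A _ => hnonneg i j A P) (mem_univ i)
    _ ≤ D P := hg.2.2.2.1 j P

/-- On null profiles `x / 0 = 0`, matching the flow, which vanishes there. -/
def ruleOfFlow (D : (∀ i, T i) → R) (g : (i : ι) → κ → T i → (∀ i, T i) → R) :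
    (∀ i, T i) → ι → κ → R :=
  fun P i j => g i j (P i) P / D P

theorem IsFeasibleFlow.isExPostRule {g : (i : ι) → κ → T i → (∀ i, T i) → R}
    (hD : ∀ P, 0 ≤ D P) (hC : ∀ i, 0 ≤ C i) (hg : IsFeasibleFlow D C π g) :
    IsExPostRule D C π (ruleOfFlow D g) := by
  have hsum := hg.sum_types_eq
  have hle := hg.apply_le
  obtain ⟨hg0, hgA, hgπ, hgS, hgI⟩ := hg
  refine ⟨fun P i j => div_nonneg (hg0 i j (P i) P) (hD P), fun P i => ?_, fun P j => ?_,
    fun i A j => ?_⟩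
  · simp only [ruleOfFlow, ← sum_div]
    refine div_le_of_le_mul₀ (hD P) (hC i) ?_
    simpa only [hsum] using hgI i P
  · simp only [ruleOfFlow, ← sum_div]
    refine div_le_of_le_mul₀ (hD P) zero_le_one ?_
    simpa only [hsum, one_mul] using hgS j P
  · rw [← hgπ i j A]
    refine sum_congr rfl fun P _ => ?_
    split_ifs with hPA
    · subst hPA
      exact div_mul_cancel_of_imp fun hP0 => le_antisymm (hP0 ▸ hle i j (P i) P) (hg0 i j _ P)
    · exact (hgA i j A P hPA).symm

theorem exists_isExPostRule_iff_exists_isFeasibleFlow (hD : ∀ P, 0 ≤ D P) (hC : ∀ i, 0 ≤ C i) :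
    (∃ φ, IsExPostRule D C π φ) ↔ ∃ g, IsFeasibleFlow D C π g :=
  ⟨fun ⟨_, hφ⟩ => ⟨_, hφ.isFeasibleFlow hD⟩, fun ⟨_, hg⟩ => ⟨_, hg.isExPostRule hD hC⟩⟩

end ReducedForm

theorem stmt_14_general (m n : ℕ) (T : Fin m → Type*)
    [∀ i, Fintype (T i)] [∀ i, DecidableEq (T i)]
    (D : (∀ i, T i) → ℝ) (hD0 : ∀ P, 0 ≤ D P)
    (C : Fin m → ℝ) (hC : ∀ i, 0 ≤ C i)
    (π : ∀ i, T i → Fin n → ℝ) :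
    (∃ φ : (∀ i, T i) → Fin m → Fin n → ℝ,
        (∀ P i j, 0 ≤ φ P i j) ∧
        (∀ P i, ∑ j, φ P i j ≤ C i) ∧
        (∀ P j, ∑ i, φ P i j ≤ 1) ∧
        (∀ (i : Fin m) (A : T i) (j : Fin n),
          (∑ P : ∀ i', T i', if P i = A then φ P i j * D P else 0)
            = π i A j * ∑ P : ∀ i', T i', if P i = A then D P else 0)) ↔
    (∃ g : (i : Fin m) → Fin n → T i → (∀ i', T i') → ℝ,
        -- flows are non-negative:
        (∀ i j A P, 0 ≤ g i j A P) ∧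
        -- commodity G_{ij}(A) only uses paths through profiles P with P_i = A:
        (∀ i j A P, P i ≠ A → g i j A P = 0) ∧
        -- every demand is satisfied:
        (∀ (i : Fin m) (j : Fin n) (A : T i),
          (∑ P : ∀ i', T i', g i j A P)
            = π i A j * ∑ P : ∀ i', T i', if P i = A then D P else 0) ∧
        -- capacity of edge S(j) → I(P):
        (∀ (j : Fin n) (P : ∀ i', T i'), ∑ i : Fin m, ∑ A : T i, g i j A P ≤ D P) ∧
        -- capacity of edge I(P) → T(i, P_i):
        (∀ (i : Fin m) (P : ∀ i', T i'),
          ∑ j : Fin n, ∑ A : T i, g i j A P ≤ C i * D P)) :=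
  exists_isExPostRule_iff_exists_isFeasibleFlow hD0 hC

/-- Multi-commodity flow characterization of feasibility for multi-item reduced forms
with demand constraints and arbitrarily correlated bidders.  A reduced form `π` is
feasible (there exists an ex-post rule `φ` with `φ ≥ 0`, `Σ_j φ_{ij}(P) ≤ C_i`,
`Σ_i φ_{ij}(P) ≤ 1`, inducing `π`) iff the associated multi-commodity flow problem has
a feasible solution `g` satisfying every demand: `g i j A P` is the flow of commodity
`G_{ij}(A)` routed on the path `S(j) → I(P) → T(i,A)` (which exists only when `P_i = A`);
the demand of commodity `G_{ij}(A)` is `Pr[t_i=A]·π_{ij}(A)`; the capacity of edge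
`S(j)→I(P)` is `Pr[P]` and of edge `I(P)→T(i,P_i)` is `C_i·Pr[P]`. -/
theorem stmt_14 (m n : ℕ) (T : Fin m → Type*)
    [∀ i, Fintype (T i)] [∀ i, DecidableEq (T i)]
    (D : (∀ i, T i) → ℝ) (hD0 : ∀ P, 0 ≤ D P) (hD1 : ∑ P, D P = 1)
    (C : Fin m → ℝ) (hC : ∀ i, 0 ≤ C i)
    (π : ∀ i, T i → Fin n → ℝ) :
    (∃ φ : (∀ i, T i) → Fin m → Fin n → ℝ,
        (∀ P i j, 0 ≤ φ P i j) ∧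
        (∀ P i, ∑ j, φ P i j ≤ C i) ∧
        (∀ P j, ∑ i, φ P i j ≤ 1) ∧
        (∀ (i : Fin m) (A : T i) (j : Fin n),
          (∑ P : ∀ i', T i', if P i = A then φ P i j * D P else 0)
            = π i A j * ∑ P : ∀ i', T i', if P i = A then D P else 0)) ↔
    (∃ g : (i : Fin m) → Fin n → T i → (∀ i', T i') → ℝ,
        -- flows are non-negative:
        (∀ i j A P, 0 ≤ g i j A P) ∧
        -- commodity G_{ij}(A) only uses paths through profiles P with P_i = A:
        (∀ i j A P, P i ≠ A → g i j A P = 0) ∧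
        -- every demand is satisfied:
        (∀ (i : Fin m) (j : Fin n) (A : T i),
          (∑ P : ∀ i', T i', g i j A P)
            = π i A j * ∑ P : ∀ i', T i', if P i = A then D P else 0) ∧
        -- capacity of edge S(j) → I(P):
        (∀ (j : Fin n) (P : ∀ i', T i'), ∑ i : Fin m, ∑ A : T i, g i j A P ≤ D P) ∧
        -- capacity of edge I(P) → T(i, P_i):
        (∀ (i : Fin m) (P : ∀ i', T i'),
          ∑ j : Fin n, ∑ A : T i, g i j A P ≤ C i * D P)) :=
  stmt_14_general m n T D hD0 C hC π
end

section
/- For a strict, partially-ordered hierarchical mechanism H in the independent-bidders single-item setting with induced reduced form π, the number of tight constraints among the polytope inequalities (the monotonicity constraints π_i(A_{i,j}) ≥ π_i(A_{i,j+1}) and the Border constraints for the down-closed sets ∪_i {A_{i,1},…,A_{i,x_i}}) is at least Σ_i |T_i|, via an injective map from types to tight constraints: a type at a level above the guaranteed-winner threshold maps to either a tight monotonicity constraint (if the next type shares its level) or the tight Border constraint of the near-constricting set of levels above it, while types below the threshold map to tight monotonicity constraints π_i(A_{i,j}) = π_i(A_{i,j+1}) (with π values 0). -/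
noncomputable def sMinLevel {m : ℕ} {T : Fin m → Type*}
    (H : (Σ i, T i) → ℕ∞) (P : ∀ i, T i) : ℕ∞ :=
  Finset.univ.inf fun j => H ⟨j, P j⟩

/-- Probability that bidder `i` receives the item under hierarchical mechanism `H` on
profile `P`. -/
noncomputable def sAlloc {m : ℕ} {T : Fin m → Type*}
    (H : (Σ i, T i) → ℕ∞) (P : ∀ i, T i) (i : Fin m) : ℝ :=
  if sMinLevel H P = ⊤ then 0
  else if H ⟨i, P i⟩ = sMinLevel H P then
    1 / ((Finset.univ.filter fun j : Fin m => H ⟨j, P j⟩ = sMinLevel H P).card : ℝ)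
  else 0

/-- Interim probability that bidder `i` reporting type `A` receives the item under `H`. -/
noncomputable def sInterim {m : ℕ} {T : Fin m → Type*}
    [∀ i, Fintype (T i)] [∀ i, DecidableEq (T i)]
    (μ : ∀ i, T i → ℝ) (H : (Σ i, T i) → ℕ∞) (i : Fin m) (A : T i) : ℝ :=
  ∑ P : ∀ j, T j,
    if P i = A then (∏ j ∈ Finset.univ.erase i, μ j (P j)) * sAlloc H P i else 0

/-! Types that always lose (level `⊤`, or deeper than the guaranteed-winner threshold) have
interim allocation `0`, and a type on the same level as its successor has the same interim
allocation; either way the monotonicity constraint below the type is tight. Every other type `t` is the last type of its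
bidder on level `H t`, and by strictness no other bidder uses that level. It is sent to the Border
constraint of the levels `≤ H t`, which is tight since both sides are the probability that some
bidder reaches level `H t`; distinct such types lie on distinct levels, so the map is injective. -/

open Finset

section Hierarchical

variable {m : ℕ} {T : Fin m → Type*} (H : (Σ i, T i) → ℕ∞)

lemma sMinLevel_le (P : ∀ i, T i) (i : Fin m) : sMinLevel H P ≤ H ⟨i, P i⟩ :=
  inf_le (f := fun j => H ⟨j, P j⟩) (mem_univ i)

lemma sMinLevel_le_iff {L : ℕ∞} (hL : L ≠ ⊤) (P : ∀ i, T i) :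
    sMinLevel H P ≤ L ↔ ∃ i, H ⟨i, P i⟩ ≤ L := by
  simp [sMinLevel, Finset.inf_le_iff (lt_top_iff_ne_top.mpr hL)]

lemma sAlloc_congr {P Q : ∀ i, T i} (h : ∀ j, H ⟨j, P j⟩ = H ⟨j, Q j⟩) (i : Fin m) :
    sAlloc H P i = sAlloc H Q i := by
  have hmin : sMinLevel H P = sMinLevel H Q := inf_congr rfl fun j _ => h j
  simp only [sAlloc, hmin, h]

lemma sAlloc_eq_zero_of_ne {P : ∀ i, T i} {i : Fin m} (h : H ⟨i, P i⟩ ≠ sMinLevel H P) :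
    sAlloc H P i = 0 := by
  simp [sAlloc, h]

lemma sum_sAlloc {P : ∀ i, T i} (h : sMinLevel H P ≠ ⊤) : ∑ i, sAlloc H P i = 1 := by
  set W := univ.filter fun j => H ⟨j, P j⟩ = sMinLevel H P
  have hW : W.Nonempty := by
    have : Nonempty (Fin m) := by
      obtain ⟨i, -⟩ : ∃ i, H ⟨i, P i⟩ ≠ ⊤ := by simpa [sMinLevel, Finset.inf_eq_top_iff] using h
      exact ⟨i⟩
    obtain ⟨i, -, hi⟩ := exists_mem_eq_inf univ univ_nonempty fun j => H ⟨j, P j⟩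
    exact ⟨i, mem_filter.mpr ⟨mem_univ i, hi.symm⟩⟩
  have hterm : ∀ i, sAlloc H P i = if H ⟨i, P i⟩ = sMinLevel H P then 1 / (#W : ℝ) else 0 :=
    fun i => by simp only [sAlloc, if_neg h, W]
  rw [sum_congr rfl fun i _ => hterm i, ← sum_filter, sum_const, nsmul_eq_mul, mul_one_div,
    div_self (Nat.cast_ne_zero.mpr hW.card_pos.ne')]

lemma sum_sAlloc_filter_le {L : ℕ∞} (hL : L ≠ ⊤) (P : ∀ i, T i) :
    ∑ i ∈ univ.filter (fun i => H ⟨i, P i⟩ ≤ L), sAlloc H P i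
      = if sMinLevel H P ≤ L then 1 else 0 := by
  split_ifs with hM
  · rw [← sum_sAlloc H (ne_top_of_le_ne_top hL hM)]
    refine sum_subset (subset_univ _) fun i _ hi => sAlloc_eq_zero_of_ne H fun he => ?_
    exact (mem_filter.not.mp hi) ⟨mem_univ i, he ▸ hM⟩
  · exact sum_eq_zero fun i hi => absurd ((sMinLevel_le H P i).trans (mem_filter.mp hi).2) hM

end Hierarchical

section Threshold

variable {m : ℕ} {T : Fin m → Type*} [∀ i, Fintype (T i)] (H : (Σ i, T i) → ℕ∞)

/-- The guaranteed-winner threshold of the paper. -/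
noncomputable def winThreshold : ℕ∞ :=
  univ.inf fun i => univ.sup fun A : T i => H ⟨i, A⟩

def AlwaysLoses (t : Σ i, T i) : Prop :=
  H t = ⊤ ∨ winThreshold H < H t

lemma sMinLevel_le_winThreshold (P : ∀ i, T i) : sMinLevel H P ≤ winThreshold H :=
  inf_mono_fun fun i _ => le_sup (f := fun A : T i => H ⟨i, A⟩) (mem_univ (P i))

variable {H} in
lemma AlwaysLoses.of_le {t t' : Σ i, T i} (ht : AlwaysLoses H t)
    (h : H t ≤ H t') : AlwaysLoses H t' :=
  ht.imp (fun (htop : H t = ⊤) => top_le_iff.mp (htop ▸ h)) fun hlt => hlt.trans_le h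

lemma sAlloc_eq_zero_of_alwaysLoses {P : ∀ i, T i} {i : Fin m}
    (h : AlwaysLoses H ⟨i, P i⟩) : sAlloc H P i = 0 := by
  by_cases hM : sMinLevel H P = ⊤
  · simp [sAlloc, hM]
  refine sAlloc_eq_zero_of_ne H fun he => ?_
  rw [AlwaysLoses, he] at h
  exact h.elim hM fun hlt => hlt.not_ge (sMinLevel_le_winThreshold H P)

end Threshold

section Interim

variable {m : ℕ} {T : Fin m → Type*} [∀ i, Fintype (T i)] [∀ i, DecidableEq (T i)]
  (μ : ∀ i, T i → ℝ) (H : (Σ i, T i) → ℕ∞)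

/-- Swapping `A` and `A'` in the `i`-th coordinate of profiles preserves all levels. -/
lemma sInterim_congr {i : Fin m} {A A' : T i} (h : H ⟨i, A⟩ = H ⟨i, A'⟩) :
    sInterim μ H i A = sInterim μ H i A' := by
  let σ : ∀ j, Equiv.Perm (T j) := Pi.mulSingle i (Equiv.swap A A')
  have hσ : ∀ (j : Fin m) (B : T j), H ⟨j, σ j B⟩ = H ⟨j, B⟩ := by
    intro j B
    rcases eq_or_ne j i with rfl | hj
    · simp only [σ, Pi.mulSingle_eq_same]
      rcases eq_or_ne B A with rfl | hA
      · rw [Equiv.swap_apply_left, h]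
      rcases eq_or_ne B A' with rfl | hA'
      · rw [Equiv.swap_apply_right, h]
      · rw [Equiv.swap_apply_of_ne_of_ne hA hA']
    · simp [σ, Pi.mulSingle_eq_of_ne hj]
  refine Fintype.sum_equiv (Equiv.piCongrRight σ) _ _ fun P => ?_
  have hi : σ i (P i) = A' ↔ P i = A := by simp [σ, Equiv.swap_apply_eq_iff]
  have hprod : ∏ j ∈ univ.erase i, μ j (σ j (P j)) = ∏ j ∈ univ.erase i, μ j (P j) :=
    prod_congr rfl fun j hj => by simp [σ, Pi.mulSingle_eq_of_ne (ne_of_mem_erase hj)]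
  change _ = if σ i (P i) = A' then
    (∏ j ∈ univ.erase i, μ j (σ j (P j))) * sAlloc H (fun j => σ j (P j)) i else 0
  simp only [hi, hprod, sAlloc_congr H (fun j => hσ j (P j))]

lemma sInterim_eq_zero_of_alwaysLoses {i : Fin m} {A : T i} (h : AlwaysLoses H ⟨i, A⟩) :
    sInterim μ H i A = 0 :=
  sum_eq_zero fun P _ => by
    split_ifs with hP
    · rw [sAlloc_eq_zero_of_alwaysLoses H (hP ▸ h), mul_zero]
    · rfl

lemma sum_sInterim_mul (i : Fin m) (s : Finset (T i)) :
    ∑ A ∈ s, sInterim μ H i A * μ i A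
      = ∑ P : ∀ j, T j, if P i ∈ s then (∏ j, μ j (P j)) * sAlloc H P i else 0 := by
  simp only [sInterim, sum_mul, ite_mul, zero_mul]
  rw [sum_comm]
  refine sum_congr rfl fun P _ => ?_
  rw [sum_ite_eq]
  split_ifs
  · rw [← mul_prod_erase univ (fun j => μ j (P j)) (mem_univ i)]
    ring
  · rfl

theorem sum_sInterim_mul_filter_le (hμ : ∀ i, ∑ A, μ i A = 1) {L : ℕ∞} (hL : L ≠ ⊤) :
    ∑ i, ∑ A ∈ univ.filter (fun A : T i => H ⟨i, A⟩ ≤ L), sInterim μ H i A * μ i A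
      = 1 - ∏ i, (1 - ∑ A ∈ univ.filter (fun A : T i => H ⟨i, A⟩ ≤ L), μ i A) := by
  set W : (∀ j, T j) → ℝ := fun P => ∏ j, μ j (P j)
  have hsold : ∑ i, ∑ A ∈ univ.filter (fun A : T i => H ⟨i, A⟩ ≤ L), sInterim μ H i A * μ i A
      = ∑ P ∈ univ.filter (fun P => sMinLevel H P ≤ L), W P := by
    simp only [sum_sInterim_mul, mem_filter, mem_univ, true_and]
    rw [sum_comm, sum_filter]
    refine sum_congr rfl fun P _ => ?_
    rw [← sum_filter, ← mul_sum, sum_sAlloc_filter_le H hL, mul_ite, mul_one, mul_zero]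
  have hunsold : ∏ i, (1 - ∑ A ∈ univ.filter (fun A : T i => H ⟨i, A⟩ ≤ L), μ i A)
      = ∑ P ∈ univ.filter (fun P => ¬ sMinLevel H P ≤ L), W P := by
    have hcompl : ∀ i, 1 - ∑ A ∈ univ.filter (fun A : T i => H ⟨i, A⟩ ≤ L), μ i A
        = ∑ A ∈ univ.filter (fun A : T i => ¬ H ⟨i, A⟩ ≤ L), μ i A := fun i => by
      rw [← hμ i, ← sum_filter_add_sum_filter_not univ (fun A : T i => H ⟨i, A⟩ ≤ L)]
      ring
    rw [prod_congr rfl fun i _ => hcompl i, prod_univ_sum]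
    congr 1
    ext P
    simp [Fintype.mem_piFinset, sMinLevel_le_iff H hL]
  have htotal : ∑ P, W P = 1 := by
    rw [← Fintype.prod_sum]
    simp [hμ]
  rw [hsold, hunsold, ← htotal, ← sum_filter_add_sum_filter_not univ (fun P => sMinLevel H P ≤ L)]
  ring

end Interim

lemma lt_card_filter_iff_of_antitone {n : ℕ} {p : Fin n → Prop} [DecidablePred p]
    (hp : Antitone p) (j : Fin n) : (j : ℕ) < #(univ.filter p) ↔ p j := by
  constructor
  · intro hj
    by_contra hpj
    have hsub : univ.filter p ⊆ Iio j := fun a ha =>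
      mem_Iio.mpr (lt_of_not_ge fun hja => hpj (hp hja (mem_filter.mp ha).2))
    have := card_le_card hsub
    rw [Fin.card_Iio] at this
    omega
  · intro hpj
    have hsub : Iic j ⊆ univ.filter p := fun a ha =>
      mem_filter.mpr ⟨mem_univ a, hp (mem_Iic.mp ha) hpj⟩
    have := card_le_card hsub
    rw [Fin.card_Iic] at this
    omega

section Prefix

variable {m : ℕ} {k : Fin m → ℕ} (H : (Σ i, Fin (k i)) → ℕ∞)

def levelPrefix (L : ℕ∞) (i : Fin m) : ℕ :=
  #(univ.filter fun j : Fin (k i) => H ⟨i, j⟩ ≤ L)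

lemma levelPrefix_le (L : ℕ∞) (i : Fin m) : levelPrefix H L i ≤ k i :=
  (card_filter_le _ _).trans (card_fin _).le

variable {H}

lemma lt_levelPrefix_iff (hH : ∀ i, Monotone fun j : Fin (k i) => H ⟨i, j⟩)
    (L : ℕ∞) (i : Fin m) (j : Fin (k i)) :
    (j : ℕ) < levelPrefix H L i ↔ H ⟨i, j⟩ ≤ L :=
  lt_card_filter_iff_of_antitone (fun _ _ hab hb => (hH i hab).trans hb) j

lemma filter_lt_levelPrefix (hH : ∀ i, Monotone fun j : Fin (k i) => H ⟨i, j⟩)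
    (L : ℕ∞) (i : Fin m) :
    univ.filter (fun j : Fin (k i) => (j : ℕ) < levelPrefix H L i)
      = univ.filter (fun j : Fin (k i) => H ⟨i, j⟩ ≤ L) :=
  filter_congr fun j _ => lt_levelPrefix_iff hH L i j

lemma le_of_levelPrefix_eq (hH : ∀ i, Monotone fun j : Fin (k i) => H ⟨i, j⟩)
    {t t' : Σ i, Fin (k i)} (h : levelPrefix H (H t) = levelPrefix H (H t')) : H t ≤ H t' :=
  (lt_levelPrefix_iff hH (H t') t.1 t.2).mp
    (h ▸ (lt_levelPrefix_iff hH (H t) t.1 t.2).mpr le_rfl)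

end Prefix

section TightConstraints

variable {m : ℕ} {k : Fin m → ℕ} (H : (Σ i, Fin (k i)) → ℕ∞)

def HasTieWithNext (t : Σ i, Fin (k i)) : Prop :=
  ∃ h : (t.2 : ℕ) + 1 < k t.1, H ⟨t.1, ⟨t.2 + 1, h⟩⟩ = H t

noncomputable def tightConstraintOf (t : Σ i, Fin (k i)) :
    (Σ i, Fin (k i)) ⊕ (Fin m → ℕ) :=
  open Classical in
  if AlwaysLoses H t ∨ HasTieWithNext H t then .inl t else .inr (levelPrefix H (H t))

lemma tightConstraintOf_eq_inl {t s : Σ i, Fin (k i)} (h : tightConstraintOf H t = .inl s) :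
    s = t ∧ (AlwaysLoses H t ∨ HasTieWithNext H t) := by
  unfold tightConstraintOf at h
  split_ifs at h with hc
  exact ⟨(Sum.inl.inj h).symm, hc⟩

lemma tightConstraintOf_eq_inr {t : Σ i, Fin (k i)} {x : Fin m → ℕ}
    (h : tightConstraintOf H t = .inr x) :
    x = levelPrefix H (H t) ∧ ¬(AlwaysLoses H t ∨ HasTieWithNext H t) := by
  unfold tightConstraintOf at h
  split_ifs at h with hc
  exact ⟨(Sum.inr.inj h).symm, hc⟩

variable {H}

lemma hasTieWithNext_of_lt (hH : ∀ i, Monotone fun j : Fin (k i) => H ⟨i, j⟩)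
    {i : Fin m} {j j' : Fin (k i)} (hjj' : j < j') (h : H ⟨i, j⟩ = H ⟨i, j'⟩) :
    HasTieWithNext H ⟨i, j⟩ := by
  have hlt : (j : ℕ) + 1 < k i := by omega
  refine ⟨hlt, le_antisymm ((hH i ?_).trans h.ge) (hH i ?_)⟩
  · exact Fin.le_def.mpr (Nat.succ_le_of_lt hjj')
  · exact Fin.le_def.mpr (Nat.le_succ _)

lemma eq_of_levelPrefix_eq (hH : ∀ i, Monotone fun j : Fin (k i) => H ⟨i, j⟩)
    (hstrict : ∀ (i i' : Fin m) (j : Fin (k i)) (j' : Fin (k i')),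
      i ≠ i' → H ⟨i, j⟩ = H ⟨i', j'⟩ → H ⟨i, j⟩ = ⊤)
    {t t' : Σ i, Fin (k i)} (ht : ¬(AlwaysLoses H t ∨ HasTieWithNext H t))
    (ht' : ¬(AlwaysLoses H t' ∨ HasTieWithNext H t'))
    (h : levelPrefix H (H t) = levelPrefix H (H t')) : t = t' := by
  have hEq : H t = H t' :=
    le_antisymm (le_of_levelPrefix_eq hH h) (le_of_levelPrefix_eq hH h.symm)
  obtain ⟨i, j⟩ := t
  obtain ⟨i', j'⟩ := t'
  obtain rfl : i = i' := by_contra fun hne => ht (.inl (.inl (hstrict i i' j j' hne hEq)))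
  rcases lt_trichotomy j j' with hlt | rfl | hgt
  · exact absurd (.inr (hasTieWithNext_of_lt hH hlt hEq)) ht
  · rfl
  · exact absurd (.inr (hasTieWithNext_of_lt hH hgt hEq.symm)) ht'

lemma tightConstraintOf_injective (hH : ∀ i, Monotone fun j : Fin (k i) => H ⟨i, j⟩)
    (hstrict : ∀ (i i' : Fin m) (j : Fin (k i)) (j' : Fin (k i')),
      i ≠ i' → H ⟨i, j⟩ = H ⟨i', j'⟩ → H ⟨i, j⟩ = ⊤) :
    Function.Injective (tightConstraintOf H) := by
  intro t t' h
  cases hx : tightConstraintOf H t with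
  | inl s =>
    rw [hx] at h
    exact (tightConstraintOf_eq_inl H hx).1.symm.trans (tightConstraintOf_eq_inl H h.symm).1
  | inr x =>
    rw [hx] at h
    obtain ⟨rfl, ht⟩ := tightConstraintOf_eq_inr H hx
    obtain ⟨hx', ht'⟩ := tightConstraintOf_eq_inr H h.symm
    exact eq_of_levelPrefix_eq hH hstrict ht ht' hx'

lemma sInterim_eq_next (hH : ∀ i, Monotone fun j : Fin (k i) => H ⟨i, j⟩)
    (μ : ∀ i, Fin (k i) → ℝ) {t : Σ i, Fin (k i)} (h : AlwaysLoses H t ∨ HasTieWithNext H t) :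
    sInterim μ H t.1 t.2
      = if h : (t.2 : ℕ) + 1 < k t.1 then sInterim μ H t.1 ⟨t.2 + 1, h⟩ else 0 := by
  rcases h with hl | ⟨hlt, htie⟩
  · rw [sInterim_eq_zero_of_alwaysLoses μ H hl]
    split_ifs with hlt
    · have hle : t.2 ≤ ⟨t.2 + 1, hlt⟩ := Fin.le_def.mpr (Nat.le_succ _)
      exact (sInterim_eq_zero_of_alwaysLoses μ H (hl.of_le (hH t.1 hle))).symm
    · rfl
  · rw [dif_pos hlt]
    exact sInterim_congr μ H htie.symm

end TightConstraints

theorem stmt_19_general (m : ℕ) (k : Fin m → ℕ)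
    (μ : ∀ i, Fin (k i) → ℝ) (hμ1 : ∀ i, ∑ j, μ i j = 1)
    (H : (Σ i, Fin (k i)) → ℕ∞)
    -- partially ordered: each bidder's types appear in order of decreasing priority:
    (hord : ∀ (i : Fin m) (j j' : Fin (k i)), j ≤ j' → H ⟨i, j⟩ ≤ H ⟨i, j'⟩)
    -- strict: no non-LOSE level is shared by types of two distinct bidders:
    (hstrict : ∀ (i i' : Fin m) (j : Fin (k i)) (j' : Fin (k i')),
      i ≠ i' → H ⟨i, j⟩ = H ⟨i', j'⟩ → H ⟨i, j⟩ = ⊤) :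
    ∃ f : (Σ i, Fin (k i)) → ((Σ i, Fin (k i)) ⊕ (Fin m → ℕ)),
      Function.Injective f ∧
      ∀ t : Σ i, Fin (k i),
        -- if `t` maps to a monotonicity constraint, that constraint is tight:
        (∀ s : Σ i, Fin (k i), f t = Sum.inl s →
          sInterim μ H s.1 s.2 =
            (if h : (s.2 : ℕ) + 1 < k s.1 then sInterim μ H s.1 ⟨(s.2 : ℕ) + 1, h⟩
             else 0)) ∧
        -- if `t` maps to a Border constraint (a prefix-set vector `x`), it is tight:
        (∀ x : Fin m → ℕ, f t = Sum.inr x → (∀ i, x i ≤ k i) ∧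
          (∑ i, ∑ j ∈ Finset.univ.filter (fun j : Fin (k i) => (j : ℕ) < x i),
              sInterim μ H i j * μ i j)
            = 1 - ∏ i,
                (1 - ∑ j ∈ Finset.univ.filter (fun j : Fin (k i) => (j : ℕ) < x i),
                  μ i j)) := by
  have hH : ∀ i, Monotone fun j : Fin (k i) => H ⟨i, j⟩ := fun i => hord i
  refine ⟨tightConstraintOf H, tightConstraintOf_injective hH hstrict,
    fun t => ⟨fun s hs => ?_, fun x hx => ?_⟩⟩
  · obtain ⟨rfl, hc⟩ := tightConstraintOf_eq_inl H hs
    exact sInterim_eq_next hH μ hc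
  · obtain ⟨rfl, hc⟩ := tightConstraintOf_eq_inr H hx
    refine ⟨levelPrefix_le H _, ?_⟩
    simp only [filter_lt_levelPrefix hH]
    exact sum_sInterim_mul_filter_le μ H hμ1 fun htop => hc (.inl (.inl htop))

/-- For a strict, partially-ordered hierarchical mechanism `H` (types of bidder `i` are
`A_{i,0}, …, A_{i,k_i−1}`, listed in decreasing priority) with induced reduced form
`π = sInterim μ H`, there is an injective map from types to tight constraints of the
polytope: each type is mapped either to a tight monotonicity constraint
`π_i(A_{i,j}) = π_i(A_{i,j+1})` (with `π_i(A_{i,k_i}) := 0`), or to a tight Border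
(near-constricting) constraint for a down-closed set `∪_i {A_{i,0},…,A_{i,x_i−1}}`.
In particular the number of tight constraints is at least `Σ_i |T_i|`. -/
theorem stmt_19 (m : ℕ) (hm : 0 < m) (k : Fin m → ℕ) (hk : ∀ i, 0 < k i)
    (μ : ∀ i, Fin (k i) → ℝ) (hμpos : ∀ i j, 0 < μ i j) (hμ1 : ∀ i, ∑ j, μ i j = 1)
    (H : (Σ i, Fin (k i)) → ℕ∞)
    -- partially ordered: each bidder's types appear in order of decreasing priority:
    (hord : ∀ (i : Fin m) (j j' : Fin (k i)), j ≤ j' → H ⟨i, j⟩ ≤ H ⟨i, j'⟩)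
    -- strict: no non-LOSE level is shared by types of two distinct bidders:
    (hstrict : ∀ (i i' : Fin m) (j : Fin (k i)) (j' : Fin (k i')),
      i ≠ i' → H ⟨i, j⟩ = H ⟨i', j'⟩ → H ⟨i, j⟩ = ⊤) :
    ∃ f : (Σ i, Fin (k i)) → ((Σ i, Fin (k i)) ⊕ (Fin m → ℕ)),
      Function.Injective f ∧
      ∀ t : Σ i, Fin (k i),
        -- if `t` maps to a monotonicity constraint, that constraint is tight:
        (∀ s : Σ i, Fin (k i), f t = Sum.inl s →
          sInterim μ H s.1 s.2 =
            (if h : (s.2 : ℕ) + 1 < k s.1 then sInterim μ H s.1 ⟨(s.2 : ℕ) + 1, h⟩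
             else 0)) ∧
        -- if `t` maps to a Border constraint (a prefix-set vector `x`), it is tight:
        (∀ x : Fin m → ℕ, f t = Sum.inr x → (∀ i, x i ≤ k i) ∧
          (∑ i, ∑ j ∈ Finset.univ.filter (fun j : Fin (k i) => (j : ℕ) < x i),
              sInterim μ H i j * μ i j)
            = 1 - ∏ i,
                (1 - ∑ j ∈ Finset.univ.filter (fun j : Fin (k i) => (j : ℕ) < x i),
                  μ i j)) :=
  stmt_19_general m k μ hμ1 H hord hstrict
end
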